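/- arXiv:2407.01698 — 10 statements merged into one kernel-verified Lean document; each statement's English description precedes it below -/
import Mathlib

section
/- For a symmetric positive semidefinite n×n matrix K of rank at least k, the maximum over all n×k real matrices F of Tr[(FᵀK²F)(FᵀKF)⁻¹] equals the sum of the k largest eigenvalues of K. -/
/-!
Write `K = U D Uᵀ` with `U` orthogonal and `D = diag μ`, `μ ≥ 0`; replacing `F` by `UᵀF` reduces
the problem to `K = D`. For `G = D^{1/2} F` the quotient equals `Tr(D P) = ∑ μᵢ Pᵢᵢ`, where
`P = G (GᵀG)⁻¹ Gᵀ` is an orthogonal projection of rank `k`. Its diagonal entries lie in `[0, 1]`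
and sum to `k`, and any such weighted sum of the `μᵢ` is at most the sum of the `k` largest ones.
Equality is attained by the eigenvectors of `k` largest eigenvalues, which are positive because
`K` has rank at least `k`.
-/

open Matrix Finset

namespace Finset

variable {ι : Type*} [Fintype ι] [DecidableEq ι] (μ : ι → ℝ)

theorem exists_sup'_powersetCard_eq_sum {k : ℕ}
    (h : (univ.powersetCard k : Finset (Finset ι)).Nonempty) :
    ∃ S ∈ univ.powersetCard k,
      (univ.powersetCard k).sup' h (fun S => ∑ i ∈ S, μ i) = ∑ i ∈ S, μ i ∧
      ∀ i ∈ S, ∀ j ∉ S, μ j ≤ μ i := by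
  obtain ⟨S, hS, hmax⟩ := exists_mem_eq_sup' h fun S => ∑ i ∈ S, μ i
  refine ⟨S, hS, hmax, fun i hi j hj => ?_⟩
  have hswap : insert j (S.erase i) ∈ univ.powersetCard k := by
    rw [mem_powersetCard] at hS ⊢
    rw [card_insert_of_notMem (fun h => hj (mem_of_mem_erase h)), card_erase_of_mem hi, hS.2,
      Nat.sub_add_cancel (hS.2 ▸ card_pos.2 ⟨i, hi⟩)]
    exact ⟨subset_univ _, rfl⟩
  have := hmax ▸ le_sup' (fun S => ∑ i ∈ S, μ i) hswap
  rw [sum_insert (fun h => hj (mem_of_mem_erase h)), ← add_sum_erase S μ hi] at this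
  linarith

theorem sum_mul_le_sum_of_forall_le (S : Finset ι) (hS : ∀ i ∈ S, ∀ j ∉ S, μ j ≤ μ i)
    {c : ι → ℝ} (hc0 : 0 ≤ c) (hc1 : c ≤ 1) (hc : ∑ i, c i = #S) :
    ∑ i, μ i * c i ≤ ∑ i ∈ S, μ i := by
  obtain ⟨τ, hτS, hτSc⟩ : ∃ τ, (∀ i ∈ S, τ ≤ μ i) ∧ ∀ j ∉ S, μ j ≤ τ := by
    rcases S.eq_empty_or_nonempty with rfl | hne
    · obtain ⟨τ, hτ⟩ := (univ.image μ).bddAbove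
      exact ⟨τ, by simp, fun j _ => hτ (mem_image_of_mem μ (mem_univ j))⟩
    · obtain ⟨i, hi, hτ⟩ := exists_mem_eq_inf' hne μ
      exact ⟨S.inf' hne μ, fun j hj => inf'_le μ hj, fun j hj => hτ ▸ hS i hi j hj⟩
  have hbalance : ∑ i ∈ S, (1 - c i) = ∑ j ∈ Sᶜ, c j := by
    rw [← sum_add_sum_compl S c] at hc
    rw [sum_sub_distrib, sum_const, nsmul_eq_mul, mul_one]
    linarith
  calc ∑ i, μ i * c i = ∑ i ∈ S, μ i - ∑ i ∈ S, μ i * (1 - c i) + ∑ j ∈ Sᶜ, μ j * c j := by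
        rw [← sum_add_sum_compl S, ← sum_sub_distrib]; simp only [mul_sub, mul_one, sub_sub_cancel]
    _ ≤ ∑ i ∈ S, μ i - ∑ i ∈ S, τ * (1 - c i) + ∑ j ∈ Sᶜ, τ * c j := by
        gcongr with i hi j hj
        · exact sub_nonneg.2 (hc1 i)
        · exact hτS i hi
        · exact hc0 j
        · exact hτSc j (mem_compl.1 hj)
    _ = ∑ i ∈ S, μ i := by rw [← mul_sum, ← mul_sum, hbalance]; ring

theorem sum_mul_le_sup'_powersetCard {k : ℕ}
    (h : (univ.powersetCard k : Finset (Finset ι)).Nonempty)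
    {c : ι → ℝ} (hc0 : 0 ≤ c) (hc1 : c ≤ 1) (hc : ∑ i, c i = k) :
    ∑ i, μ i * c i ≤ (univ.powersetCard k).sup' h (fun S => ∑ i ∈ S, μ i) := by
  obtain ⟨S, hS, hmax, htop⟩ := exists_sup'_powersetCard_eq_sum μ h
  rw [hmax]
  exact sum_mul_le_sum_of_forall_le μ S htop hc0 hc1 (by rw [hc, (mem_powersetCard.1 hS).2])

theorem pos_of_forall_notMem_le_of_card_le {μ : ι → ℝ} (hμ : 0 ≤ μ) {S : Finset ι}
    (hS : ∀ i ∈ S, ∀ j ∉ S, μ j ≤ μ i) (hcard : #S ≤ #{i | μ i ≠ 0}) :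
    ∀ i ∈ S, 0 < μ i := by
  intro i hi
  refine (hμ i).lt_of_ne fun hzero => ?_
  have hsub : ({j | μ j ≠ 0} : Finset ι) ⊆ S.erase i := by
    intro j hj
    rw [mem_filter] at hj
    refine mem_erase.2 ⟨fun hji => hj.2 (hji ▸ hzero.symm), ?_⟩
    by_contra hjS
    exact hj.2 (le_antisymm ((hS i hi j hjS).trans_eq hzero.symm) (hμ j))
  have := card_le_card hsub
  rw [card_erase_of_mem hi] at this
  have := card_pos.2 ⟨i, hi⟩
  omega

end Finset

namespace Matrix

variable {m ι : Type*} [Fintype m]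

theorem IsStarProjection.diag_eq_sum_sq {P : Matrix m m ℝ} (hP : IsStarProjection P) (i : m) :
    P i i = ∑ j, P i j ^ 2 := by
  have hsymm : Pᵀ = P := by
    simpa [star_eq_conjTranspose, conjTranspose_eq_transpose_of_trivial] using
      hP.isSelfAdjoint.star_eq
  conv_lhs => rw [← hP.isIdempotentElem.eq, mul_apply]
  refine sum_congr rfl fun j _ => ?_
  rw [sq, ← transpose_apply P j i, hsymm]

theorem IsStarProjection.diag_nonneg {P : Matrix m m ℝ} (hP : IsStarProjection P) :
    0 ≤ P.diag := fun i => by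
  simpa [hP.diag_eq_sum_sq i] using sum_nonneg fun j _ => sq_nonneg (P i j)

theorem IsStarProjection.diag_le_one {P : Matrix m m ℝ} (hP : IsStarProjection P) :
    P.diag ≤ 1 := fun i => by
  have hsq : P i i ^ 2 ≤ P i i := by
    conv_rhs => rw [hP.diag_eq_sum_sq i]
    exact single_le_sum (f := fun j => P i j ^ 2) (fun j _ => sq_nonneg _) (mem_univ i)
  have := hP.diag_nonneg i
  simp only [diag_apply, Pi.one_apply, Pi.zero_apply] at this ⊢
  nlinarith

theorem transpose_mul_conj_mul {U : Matrix m m ℝ} (A : Matrix m m ℝ) (F : Matrix m ι ℝ) :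
    Fᵀ * (U * A * star U) * F = (star U * F)ᵀ * A * (star U * F) := by
  simp [star_eq_conjTranspose, conjTranspose_eq_transpose_of_trivial, transpose_mul,
    Matrix.mul_assoc]

theorem transpose_one_submatrix_mul_mul {α : Type*} [NonAssocSemiring α] [DecidableEq m]
    (A : Matrix m m α) (e : ι → m) :
    ((1 : Matrix m m α).submatrix id e)ᵀ * A * (1 : Matrix m m α).submatrix id e =
      A.submatrix e e := by
  ext i j
  simp [mul_apply, one_apply]

variable [Fintype ι]

theorem trace_transpose_mul_diagonal_mul_mul {α : Type*} [CommSemiring α] [DecidableEq m]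
    (μ : m → α) (G : Matrix m ι α) (B : Matrix ι ι α) :
    (Gᵀ * diagonal μ * G * B).trace = ∑ i, μ i * (G * B * Gᵀ) i i := by
  rw [Matrix.mul_assoc, Matrix.mul_assoc, trace_mul_comm, Matrix.mul_assoc]
  simp only [trace, diag_apply, diagonal_mul]

variable [DecidableEq ι]

theorem isStarProjection_mul_inv_gram_mul_transpose {G : Matrix m ι ℝ}
    (hG : IsUnit (Gᵀ * G).det) : IsStarProjection (G * (Gᵀ * G)⁻¹ * Gᵀ) := by
  refine ⟨?_, ?_⟩
  · change _ * _ = _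
    calc G * (Gᵀ * G)⁻¹ * Gᵀ * (G * (Gᵀ * G)⁻¹ * Gᵀ)
        = G * ((Gᵀ * G)⁻¹ * (Gᵀ * G)) * (Gᵀ * G)⁻¹ * Gᵀ := by simp only [Matrix.mul_assoc]
      _ = G * (Gᵀ * G)⁻¹ * Gᵀ := by rw [nonsing_inv_mul _ hG, Matrix.mul_one]
  · rw [IsSelfAdjoint, star_eq_conjTranspose, conjTranspose_eq_transpose_of_trivial]
    simp [transpose_nonsing_inv, Matrix.mul_assoc]

theorem trace_mul_inv_gram_mul_transpose {G : Matrix m ι ℝ} (hG : IsUnit (Gᵀ * G).det) :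
    (G * (Gᵀ * G)⁻¹ * Gᵀ).trace = Fintype.card ι := by
  rw [trace_mul_cycle, mul_nonsing_inv _ hG, trace_one]

variable (ι) in
def traceRatioSet (A : Matrix m m ℝ) : Set ℝ :=
  {t | ∃ F : Matrix m ι ℝ, IsUnit (Fᵀ * A * F).det ∧
    t = ((Fᵀ * (A * A) * F) * (Fᵀ * A * F)⁻¹).trace}

variable [DecidableEq m]

theorem traceRatioSet_conj {U : Matrix m m ℝ} (hU : U ∈ unitaryGroup m ℝ) (A : Matrix m m ℝ) :
    traceRatioSet ι (U * A * star U) = traceRatioSet ι A := by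
  have hsq : U * A * star U * (U * A * star U) = U * (A * A) * star U := by
    simp only [Matrix.mul_assoc, ← Matrix.mul_assoc (star U) U, mem_unitaryGroup_iff'.1 hU,
      Matrix.one_mul]
  ext t
  constructor
  · rintro ⟨F, hF, rfl⟩
    refine ⟨star U * F, ?_, ?_⟩
    · rwa [← transpose_mul_conj_mul]
    · rw [← transpose_mul_conj_mul, ← transpose_mul_conj_mul, hsq]
  · rintro ⟨F, hF, rfl⟩
    have hUF : star U * (U * F) = F := by
      rw [← Matrix.mul_assoc, mem_unitaryGroup_iff'.1 hU, Matrix.one_mul]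
    refine ⟨U * F, ?_, ?_⟩
    · rwa [transpose_mul_conj_mul, hUF]
    · rw [hsq, transpose_mul_conj_mul, transpose_mul_conj_mul, hUF]

theorem IsHermitian.traceRatioSet_eq_diagonal {A : Matrix m m ℝ} (hA : A.IsHermitian) :
    traceRatioSet ι A = traceRatioSet ι (diagonal hA.eigenvalues) := by
  conv_lhs => rw [hA.spectral_theorem]
  simpa using traceRatioSet_conj hA.eigenvectorUnitary.2 (diagonal hA.eigenvalues)

theorem sum_comp_mem_traceRatioSet_diagonal {μ : m → ℝ} (e : ι ↪ m) (he : ∀ j, μ (e j) ≠ 0) :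
    ∑ j, μ (e j) ∈ traceRatioSet ι (diagonal μ) := by
  refine ⟨(1 : Matrix m m ℝ).submatrix id e, ?_, ?_⟩ <;>
    simp only [transpose_one_submatrix_mul_mul, diagonal_mul_diagonal,
      submatrix_diagonal_embedding]
  · rw [det_diagonal]
    exact (prod_ne_zero_iff.2 fun j _ => he j).isUnit
  · have hinv : (diagonal (μ ∘ e))⁻¹ = diagonal (μ ∘ e)⁻¹ := by
      refine inv_eq_right_inv ?_
      rw [diagonal_mul_diagonal, ← diagonal_one]
      exact congrArg diagonal (funext fun j => mul_inv_cancel₀ (he j))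
    rw [hinv, diagonal_mul_diagonal, trace_diagonal]
    exact sum_congr rfl fun j _ => by simp [mul_inv_cancel_right₀ (he j)]

theorem le_sup'_of_mem_traceRatioSet_diagonal {μ : m → ℝ} (hμ : 0 ≤ μ) {k : ℕ}
    (hι : Fintype.card ι = k) (h : (univ.powersetCard k : Finset (Finset m)).Nonempty) {t : ℝ}
    (ht : t ∈ traceRatioSet ι (diagonal μ)) :
    t ≤ (univ.powersetCard k).sup' h (fun S => ∑ i ∈ S, μ i) := by
  obtain ⟨H, hH, rfl⟩ := ht
  obtain ⟨R, hRt, hRR⟩ : ∃ R : Matrix m m ℝ, Rᵀ = R ∧ R * R = diagonal μ :=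
    ⟨diagonal fun i => √(μ i), diagonal_transpose _, by
      rw [diagonal_mul_diagonal]
      exact congrArg diagonal (funext fun i => Real.mul_self_sqrt (hμ i))⟩
  -- with `G = D^{1/2} H` the quotient becomes the trace of `D` against an orthogonal projection
  set G := R * H
  have hgram : Gᵀ * G = Hᵀ * diagonal μ * H := by
    rw [transpose_mul, hRt, ← hRR]; simp only [G, Matrix.mul_assoc]
  have hquad : Gᵀ * diagonal μ * G = Hᵀ * (diagonal μ * diagonal μ) * H := by
    rw [transpose_mul, hRt, ← hRR]; simp only [G, Matrix.mul_assoc]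
  rw [← hgram, ← hquad, trace_transpose_mul_diagonal_mul_mul]
  rw [← hgram] at hH
  have hP := isStarProjection_mul_inv_gram_mul_transpose hH
  exact sum_mul_le_sup'_powersetCard μ h hP.diag_nonneg hP.diag_le_one
    ((trace_mul_inv_gram_mul_transpose hH).trans (by rw [hι]))

theorem isGreatest_traceRatioSet_diagonal {μ : m → ℝ} (hμ : 0 ≤ μ) {k : ℕ}
    (hι : Fintype.card ι = k) (hk : k ≤ #{i | μ i ≠ 0})
    (h : (univ.powersetCard k : Finset (Finset m)).Nonempty) :
    IsGreatest (traceRatioSet ι (diagonal μ))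
      ((univ.powersetCard k).sup' h fun S => ∑ i ∈ S, μ i) := by
  refine ⟨?_, fun t ht => le_sup'_of_mem_traceRatioSet_diagonal hμ hι h ht⟩
  obtain ⟨S, hS, hmax, htop⟩ := exists_sup'_powersetCard_eq_sum μ h
  rw [mem_powersetCard] at hS
  have hpos := pos_of_forall_notMem_le_of_card_le hμ htop (hS.2 ▸ hk)
  let eS : ι ≃ S := Fintype.equivOfCardEq (by simp [hι, hS.2])
  let e : ι ↪ m := eS.toEmbedding.trans (Function.Embedding.subtype _)
  have hsum : ∑ j, μ (e j) = ∑ i ∈ S, μ i := by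
    rw [← sum_coe_sort S]
    exact Fintype.sum_equiv eS _ _ fun j => rfl
  rw [hmax, ← hsum]
  exact sum_comp_mem_traceRatioSet_diagonal e fun j => (hpos _ (eS j).2).ne'

end Matrix

/-- For a symmetric positive semidefinite `n × n` matrix `K` of rank at least `k`,
the maximum over all `n × k` real matrices `F` (with `Fᵀ K F` invertible) of
`Tr[(Fᵀ K² F)(Fᵀ K F)⁻¹]` equals the sum of the `k` largest eigenvalues of `K`. -/
theorem stmt_0 (n k : ℕ) (hk : k ≤ n)
    (K : Matrix (Fin n) (Fin n) ℝ) (hK : K.PosSemidef) (hrank : k ≤ K.rank) :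
    IsGreatest
      {t : ℝ | ∃ F : Matrix (Fin n) (Fin k) ℝ, IsUnit (Fᵀ * K * F).det ∧
        t = ((Fᵀ * (K * K) * F) * (Fᵀ * K * F)⁻¹).trace}
      ((Finset.univ.powersetCard k).sup'
        (Finset.powersetCard_nonempty.mpr (by simpa using hk))
        (fun S => ∑ i ∈ S, hK.1.eigenvalues i)) := by
  have hnonzero : k ≤ #{i | hK.1.eigenvalues i ≠ 0} := by
    rwa [hK.1.rank_eq_card_non_zero_eigs, Fintype.card_subtype] at hrank
  change IsGreatest (traceRatioSet (Fin k) K) _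
  rw [hK.1.traceRatioSet_eq_diagonal]
  exact isGreatest_traceRatioSet_diagonal hK.eigenvalues_nonneg (Fintype.card_fin k) hnonzero _
end

section
/- For a rectangular matrix A and column index subset J, the squared Frobenius norm of A minus its projection onto the span of the selected columns, ‖A_{:,J} A_{:,J}⁺ A − A‖_F², equals Tr[K] − Tr[K_{:,J}(K_{J,J})⁻¹K_{J,:}] where K = AᵀA. -/
open Matrix BigOperators

/-- The inclusion of a finite set of indices. -/
def incl {n : ℕ} (J : Finset (Fin n)) : {x // x ∈ J} → Fin n := fun j => j

/-!
`P = C (CᵀC)⁻¹ Cᵀ` is a symmetric idempotent, so the residual `PA - A` has Gram matrix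
`AᵀA - AᵀPA`. Taking traces and recognising `AᵀC`, `CᵀC`, `CᵀA` as the blocks `K_{:,J}`, `K_{J,J}`,
`K_{J,:}` of `K = AᵀA` gives the formula.
-/

namespace Matrix

variable {R : Type*} [CommRing R] {m n k : Type*} [Fintype m]

theorem submatrix_transpose_mul_self {ι κ : Type*} (A : Matrix m n R) (r : ι → n) (c : κ → n) :
    (Aᵀ * A).submatrix r c = (A.submatrix id r)ᵀ * A.submatrix id c := by
  rw [submatrix_mul Aᵀ A r id c Function.bijective_id, transpose_submatrix]

theorem transpose_mul_self_of_mul_sub_self_of_idempotent {P : Matrix m m R}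
    (hPt : Pᵀ = P) (hPP : P * P = P) (A : Matrix m n R) :
    (P * A - A)ᵀ * (P * A - A) = Aᵀ * A - Aᵀ * P * A := by
  have hAPPA : Aᵀ * P * (P * A) = Aᵀ * P * A := by
    rw [← Matrix.mul_assoc, Matrix.mul_assoc Aᵀ, hPP]
  rw [transpose_sub, transpose_mul, hPt, Matrix.sub_mul, Matrix.mul_sub, Matrix.mul_sub, hAPPA,
    ← Matrix.mul_assoc Aᵀ P A]
  abel

variable [Fintype k] [DecidableEq k]

noncomputable def colSpaceProj (C : Matrix m k R) : Matrix m m R := C * (Cᵀ * C)⁻¹ * Cᵀ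

theorem transpose_colSpaceProj (C : Matrix m k R) : (colSpaceProj C)ᵀ = colSpaceProj C := by
  rw [colSpaceProj, transpose_mul, transpose_mul, transpose_nonsing_inv, transpose_mul,
    transpose_transpose, Matrix.mul_assoc]

theorem colSpaceProj_mul_self {C : Matrix m k R} (hC : IsUnit (Cᵀ * C).det) :
    colSpaceProj C * colSpaceProj C = colSpaceProj C := by
  have hinv : (Cᵀ * C)⁻¹ * (Cᵀ * C) = 1 := nonsing_inv_mul _ hC
  calc colSpaceProj C * colSpaceProj C
      = C * ((Cᵀ * C)⁻¹ * (Cᵀ * C)) * ((Cᵀ * C)⁻¹ * Cᵀ) := by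
        simp only [colSpaceProj, Matrix.mul_assoc]
    _ = colSpaceProj C := by
        rw [hinv, Matrix.mul_one, colSpaceProj, Matrix.mul_assoc]

end Matrix

/-- For a rectangular matrix `A` and a column subset `J` such that `A_{:,J}` has full
column rank (so that its Moore–Penrose pseudoinverse is `(CᵀC)⁻¹Cᵀ` for `C = A_{:,J}`),
`‖A_{:,J} A_{:,J}⁺ A − A‖_F² = Tr[K] − Tr[K_{:,J}(K_{J,J})⁻¹K_{J,:}]` where `K = AᵀA`. -/
theorem stmt_1 (m n : ℕ) (A : Matrix (Fin m) (Fin n) ℝ) (J : Finset (Fin n))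
    (hfull : IsUnit ((A.submatrix id (incl J))ᵀ * A.submatrix id (incl J)).det) :
    (let C := A.submatrix id (incl J)
     let Cpinv := (Cᵀ * C)⁻¹ * Cᵀ
     ((C * Cpinv * A - A)ᵀ * (C * Cpinv * A - A)).trace)
    = (let K := Aᵀ * A
       K.trace - (K.submatrix id (incl J) *
          (K.submatrix (incl J) (incl J))⁻¹ * K.submatrix (incl J) id).trace) := by
  dsimp only
  rw [submatrix_transpose_mul_self, submatrix_transpose_mul_self, submatrix_transpose_mul_self,
    submatrix_id_id]
  set C := A.submatrix id (incl J)
  have hproj : C * ((Cᵀ * C)⁻¹ * Cᵀ) * A = colSpaceProj C * A := by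
    simp only [colSpaceProj, Matrix.mul_assoc]
  rw [hproj, transpose_mul_self_of_mul_sub_self_of_idempotent (transpose_colSpaceProj C)
      (colSpaceProj_mul_self hfull), trace_sub]
  simp only [colSpaceProj, Matrix.mul_assoc]
end

section
/- Given an m×n matrix A with selected columns C = A_{:,J} and rows R = A_{I,:}, and choosing U = C⁺AR⁺, the Frobenius norm error satisfies ‖A − CUR‖_F ≤ ‖A − CC⁺A‖_F + ‖A − AR⁺R‖_F. -/
open Matrix BigOperators

/-- The Frobenius norm of a real matrix. -/
noncomputable def frob {α β : Type*} [Fintype α] [Fintype β]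
    (M : Matrix α β ℝ) : ℝ := Real.sqrt (Mᵀ * M).trace

attribute [local instance] Matrix.frobeniusSeminormedAddCommGroup

lemma trace_eq_sum {α β : Type*} [Fintype α] [Fintype β] (M : Matrix α β ℝ) :
    (Mᵀ * M).trace = ∑ j, ∑ i, M i j * M i j := by
  simp [Matrix.trace, Matrix.mul_apply, Matrix.diag]

lemma trace_nonneg {α β : Type*} [Fintype α] [Fintype β] (M : Matrix α β ℝ) :
    0 ≤ (Mᵀ * M).trace := by
  rw [trace_eq_sum]
  exact Finset.sum_nonneg fun j _ => Finset.sum_nonneg fun i _ => mul_self_nonneg _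

lemma frob_eq_norm {α β : Type*} [Fintype α] [Fintype β] (M : Matrix α β ℝ) :
    frob M = ‖M‖ := by
  rw [frob, Matrix.frobenius_norm_def, trace_eq_sum, Real.sqrt_eq_rpow]
  congr 1
  rw [Finset.sum_comm]
  congr 1; funext i; congr 1; funext j
  rw [Real.rpow_two, Real.norm_eq_abs, sq_abs, sq]

lemma frob_proj_le {α β : Type*} [Fintype α] [Fintype β] [DecidableEq α]
    (P : Matrix α α ℝ) (hsym : Pᵀ = P) (hidem : P * P = P) (M : Matrix α β ℝ) :
    frob (P * M) ≤ frob M := by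
  apply Real.sqrt_le_sqrt
  have key : (Mᵀ * M).trace - ((P * M)ᵀ * (P * M)).trace
      = (((1 - P) * M)ᵀ * ((1 - P) * M)).trace := by
    have h1 : ((1 - P) * M)ᵀ * ((1 - P) * M) = Mᵀ * M - (P * M)ᵀ * (P * M) := by
      have h2 : P * (P * M) = P * M := by rw [← Matrix.mul_assoc, hidem]
      simp only [Matrix.transpose_mul, Matrix.transpose_sub, Matrix.transpose_one, hsym,
        Matrix.sub_mul, Matrix.mul_sub, Matrix.one_mul, Matrix.mul_one, Matrix.mul_assoc, h2]
      abel
    rw [h1, Matrix.trace_sub]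
  nlinarith [trace_nonneg ((1 - P) * M), trace_nonneg (P * M), trace_nonneg M]

lemma frob_key {α β : Type*} [Fintype α] [Fintype β] [DecidableEq α]
    (P : Matrix α α ℝ) (hsym : Pᵀ = P) (hidem : P * P = P)
    (A : Matrix α β ℝ) (Q : Matrix β β ℝ) :
    frob (A - P * A * Q) ≤ frob (A - P * A) + frob (A - A * Q) := by
  have hdec : A - P * A * Q = (A - P * A) + P * (A - A * Q) := by
    rw [Matrix.mul_sub, ← Matrix.mul_assoc]
    abel
  rw [hdec, frob_eq_norm, frob_eq_norm, frob_eq_norm]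
  calc ‖(A - P * A) + P * (A - A * Q)‖
      ≤ ‖A - P * A‖ + ‖P * (A - A * Q)‖ := norm_add_le _ _
    _ ≤ ‖A - P * A‖ + ‖A - A * Q‖ := by
        have := frob_proj_le P hsym hidem (A - A * Q)
        rw [frob_eq_norm, frob_eq_norm] at this
        linarith

/-- Given `A` with selected columns `C = A_{:,J}` (full column rank) and rows
`R = A_{I,:}` (full row rank), so that `C⁺ = (CᵀC)⁻¹Cᵀ` and `R⁺ = Rᵀ(RRᵀ)⁻¹`, and
choosing `U = C⁺ A R⁺`, one has `‖A − CUR‖_F ≤ ‖A − CC⁺A‖_F + ‖A − AR⁺R‖_F`. -/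
theorem stmt_2 (m n : ℕ) (A : Matrix (Fin m) (Fin n) ℝ)
    (I : Finset (Fin m)) (J : Finset (Fin n))
    (hC : IsUnit ((A.submatrix id (incl J))ᵀ * A.submatrix id (incl J)).det)
    (hR : IsUnit (A.submatrix (incl I) id * (A.submatrix (incl I) id)ᵀ).det) :
    (let C := A.submatrix id (incl J)
     let R := A.submatrix (incl I) id
     let Cp := (Cᵀ * C)⁻¹ * Cᵀ
     let Rp := Rᵀ * (R * Rᵀ)⁻¹
     let U := Cp * A * Rp
     frob (A - C * U * R) ≤ frob (A - C * Cp * A) + frob (A - A * Rp * R)) := by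
  dsimp only
  set C := A.submatrix id (incl J) with hCd
  set R := A.submatrix (incl I) id with hRd
  have hsym : (C * ((Cᵀ * C)⁻¹ * Cᵀ))ᵀ = C * ((Cᵀ * C)⁻¹ * Cᵀ) := by
    simp [Matrix.transpose_mul, Matrix.transpose_nonsing_inv, Matrix.mul_assoc]
  have hidem : (C * ((Cᵀ * C)⁻¹ * Cᵀ)) * (C * ((Cᵀ * C)⁻¹ * Cᵀ))
      = C * ((Cᵀ * C)⁻¹ * Cᵀ) := by
    have h := Matrix.nonsing_inv_mul (Cᵀ * C) hC
    have h2 : (Cᵀ * C)⁻¹ * Cᵀ * (C * ((Cᵀ * C)⁻¹ * Cᵀ)) = (Cᵀ * C)⁻¹ * Cᵀ := by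
      calc (Cᵀ * C)⁻¹ * Cᵀ * (C * ((Cᵀ * C)⁻¹ * Cᵀ))
          = ((Cᵀ * C)⁻¹ * (Cᵀ * C)) * ((Cᵀ * C)⁻¹ * Cᵀ) := by
            simp only [Matrix.mul_assoc]
        _ = (Cᵀ * C)⁻¹ * Cᵀ := by rw [h, Matrix.one_mul]
    rw [Matrix.mul_assoc, h2]
  have hkey := frob_key (C * ((Cᵀ * C)⁻¹ * Cᵀ)) hsym hidem A (Rᵀ * ((R * Rᵀ)⁻¹ * R))
  simp only [Matrix.mul_assoc] at hkey ⊢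
  exact hkey
end

section
/- For a symmetric positive semidefinite matrix K, an index subset I with K_{I,I} invertible, and an index j ∉ I with (K_{I∪{j},I∪{j}}) invertible, the nuclear objective satisfies Tr[(K²)_{I∪{j},I∪{j}}(K_{I∪{j},I∪{j}})⁻¹] = Tr[(K²)_{I,I}(K_{I,I})⁻¹] + (K̃²)_{j,j}/K̃_{j,j}, where K̃ = K − K_{:,I}(K_{I,I})⁻¹K_{I,:}. -/
open Matrix BigOperators

/-!
Write `P_I` for `(K_{I,I})⁻¹` extended by zero to an `n × n` matrix. Then
`Tr[M_{I,I} (K_{I,I})⁻¹] = Tr[M P_I]` and `K̃ = K - K P_I K`. With `v = e_j - P_I K e_j`, the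
Schur complement formula for the inverse of a bordered matrix reads
`P_{I ∪ {j}} = P_I + v vᵀ / K̃_{j,j}`; to check it one only needs that `K P_I` agrees with the
identity on the rows in `I`, that `K̃` vanishes on those rows, and that `K v = K̃ e_j`.
So adding `j` raises the objective by `vᵀ K² v / K̃_{j,j} = ‖K̃ e_j‖² / K̃_{j,j}`,
which is `(K̃²)_{j,j} / K̃_{j,j}` by symmetry of `K̃`.
-/

theorem Finset.sum_univ_eq_sum_coe_of_notMem {ι M : Type*} [Fintype ι] [AddCommMonoid M]
    {J : Finset ι} {f : ι → M} (hf : ∀ r ∉ J, f r = 0) : ∑ r, f r = ∑ a : J, f a := by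
  rw [Finset.sum_coe_sort, Finset.sum_subset (Finset.subset_univ J) fun r _ hr => hf r hr]

namespace Matrix

variable {ι R : Type*} [DecidableEq ι]

def extendByZero [Zero R] {J : Finset ι} (N : Matrix J J R) : Matrix ι ι R :=
  of fun p q => if h : p ∈ J ∧ q ∈ J then N ⟨p, h.1⟩ ⟨q, h.2⟩ else 0

section Zero
variable [Zero R] {J : Finset ι} (N : Matrix J J R)

@[simp]
theorem extendByZero_apply_coe (a b : J) : extendByZero N a b = N a b := by
  simp [extendByZero]

theorem extendByZero_apply_of_notMem_left {p : ι} (hp : p ∉ J) (q : ι) :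
    extendByZero N p q = 0 := by
  simp [extendByZero, hp]

theorem extendByZero_apply_of_notMem_right (p : ι) {q : ι} (hq : q ∉ J) :
    extendByZero N p q = 0 := by
  simp [extendByZero, hq]

theorem transpose_extendByZero : (extendByZero N)ᵀ = extendByZero Nᵀ := by
  ext p q
  by_cases h : p ∈ J ∧ q ∈ J
  · simp [extendByZero, h]
  · simp [extendByZero, h, and_comm]

theorem extendByZero_submatrix {Q : Matrix ι ι R}
    (hQ : ∀ p q, Q p q ≠ 0 → p ∈ J ∧ q ∈ J) :
    extendByZero (Q.submatrix (Subtype.val : J → ι) Subtype.val) = Q := by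
  ext p q
  by_cases h : p ∈ J ∧ q ∈ J
  · simp [extendByZero, h]
  · simp only [extendByZero, h, of_apply, dite_false]
    exact (not_not.mp (mt (hQ p q) h)).symm

end Zero

section Semiring
variable [Fintype ι] [Semiring R] {J : Finset ι}

theorem mul_extendByZero_apply_coe (M : Matrix ι ι R) (N : Matrix J J R) (p : ι) (b : J) :
    (M * extendByZero N) p b = (M.submatrix id (Subtype.val : J → ι) * N) p b := by
  rw [mul_apply, Finset.sum_univ_eq_sum_coe_of_notMem fun r hr => by
    rw [extendByZero_apply_of_notMem_left _ hr, mul_zero]]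
  simp [mul_apply]

theorem mul_extendByZero_apply_of_notMem (M : Matrix ι ι R) (N : Matrix J J R) (p : ι) {q : ι}
    (hq : q ∉ J) : (M * extendByZero N) p q = 0 := by
  simp [mul_apply, extendByZero_apply_of_notMem_right _ _ hq]

theorem trace_submatrix_mul (M : Matrix ι ι R) (N : Matrix J J R) :
    (M.submatrix (Subtype.val : J → ι) Subtype.val * N).trace = (M * extendByZero N).trace := by
  rw [trace, trace, Finset.sum_univ_eq_sum_coe_of_notMem (J := J)]
  · simp only [diag_apply, mul_extendByZero_apply_coe]
    rfl
  · exact fun p hp => mul_extendByZero_apply_of_notMem _ _ _ hp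

theorem submatrix_mul_mul_submatrix (M M' : Matrix ι ι R) (N : Matrix J J R) :
    M.submatrix id (Subtype.val : J → ι) * N * M'.submatrix (Subtype.val : J → ι) id =
      M * extendByZero N * M' := by
  ext p q
  rw [mul_apply (M := M * extendByZero N), Finset.sum_univ_eq_sum_coe_of_notMem fun r hr => by
    rw [mul_extendByZero_apply_of_notMem _ _ _ hr, zero_mul], mul_apply]
  simp [mul_extendByZero_apply_coe]

end Semiring

section CommRing
variable [Fintype ι] [CommRing R] {J : Finset ι}

theorem mul_extendByZero_inv_apply_of_mem (K : Matrix ι ι R)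
    (hJ : IsUnit (K.submatrix (Subtype.val : J → ι) Subtype.val).det) {p : ι} (hp : p ∈ J)
    (q : ι) :
    (K * extendByZero (K.submatrix (Subtype.val : J → ι) Subtype.val)⁻¹) p q =
      (1 : Matrix ι ι R) p q := by
  by_cases hq : q ∈ J
  · have hinv := congr_fun (congr_fun (mul_nonsing_inv _ hJ) ⟨p, hp⟩) ⟨q, hq⟩
    rw [mul_extendByZero_apply_coe _ _ _ ⟨q, hq⟩]
    exact hinv.trans (congr_fun (congr_fun (submatrix_one _ Subtype.val_injective) _) _).symm
  · rw [mul_extendByZero_apply_of_notMem _ _ _ hq, one_apply_ne (by rintro rfl; exact hq hp)]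

theorem extendByZero_inv_eq_of_mul_apply {K Q : Matrix ι ι R}
    (hQ : ∀ p q, Q p q ≠ 0 → p ∈ J ∧ q ∈ J)
    (hKQ : ∀ p ∈ J, ∀ q ∈ J, (K * Q) p q = (1 : Matrix ι ι R) p q) :
    extendByZero (K.submatrix (Subtype.val : J → ι) Subtype.val)⁻¹ = Q := by
  set Q' := Q.submatrix (Subtype.val : J → ι) Subtype.val
  have hQ' : extendByZero Q' = Q := extendByZero_submatrix hQ
  rw [← hQ', inv_eq_right_inv (ext fun a b => ?_)]
  have hab := hKQ a a.2 b b.2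
  rw [← hQ', mul_extendByZero_apply_coe _ _ _ b] at hab
  exact hab.trans (congr_fun (congr_fun (submatrix_one _ Subtype.val_injective) a) b)

end CommRing

section Nystrom
variable [Field R]

noncomputable def nystromInv (K : Matrix ι ι R) (I : Finset ι) : Matrix ι ι R :=
  extendByZero (K.submatrix (Subtype.val : I → ι) Subtype.val)⁻¹

variable {K : Matrix ι ι R} {I : Finset ι}

theorem IsSymm.nystromInv (hK : K.IsSymm) : (nystromInv K I).IsSymm := by
  rw [Matrix.nystromInv, IsSymm, transpose_extendByZero, ((hK.submatrix _).inv).eq]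

theorem nystromInv_apply_of_notMem_left {p : ι} (hp : p ∉ I) (q : ι) :
    nystromInv K I p q = 0 :=
  extendByZero_apply_of_notMem_left _ hp q

theorem nystromInv_apply_of_notMem_right (p : ι) {q : ι} (hq : q ∉ I) :
    nystromInv K I p q = 0 :=
  extendByZero_apply_of_notMem_right _ p hq

variable [Fintype ι]

noncomputable def nystromRemainder (K : Matrix ι ι R) (I : Finset ι) : Matrix ι ι R :=
  K - K * nystromInv K I * K

noncomputable def nystromDirection (K : Matrix ι ι R) (I : Finset ι) (j : ι) : ι → R :=
  (1 - nystromInv K I * K) *ᵥ Pi.single j 1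

theorem IsSymm.nystromRemainder (hK : K.IsSymm) : (nystromRemainder K I).IsSymm := by
  rw [Matrix.nystromRemainder, IsSymm, transpose_sub, transpose_mul, transpose_mul,
    hK.eq, hK.nystromInv.eq, Matrix.mul_assoc]

theorem mul_nystromInv_apply_of_mem
    (hI : IsUnit (K.submatrix (Subtype.val : I → ι) Subtype.val).det) {p : ι} (hp : p ∈ I)
    (q : ι) : (K * nystromInv K I) p q = (1 : Matrix ι ι R) p q :=
  mul_extendByZero_inv_apply_of_mem K hI hp q

theorem nystromRemainder_apply_of_mem
    (hI : IsUnit (K.submatrix (Subtype.val : I → ι) Subtype.val).det) {p : ι} (hp : p ∈ I)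
    (q : ι) : nystromRemainder K I p q = 0 := by
  rw [nystromRemainder, sub_apply, mul_apply]
  simp [mul_nystromInv_apply_of_mem hI hp, one_apply]

theorem mulVec_nystromDirection (j : ι) :
    K *ᵥ nystromDirection K I j = (nystromRemainder K I).col j := by
  rw [nystromDirection, mulVec_mulVec, Matrix.mul_sub, Matrix.mul_one, ← Matrix.mul_assoc,
    mulVec_single_one, nystromRemainder]

theorem nystromDirection_apply (j q : ι) :
    nystromDirection K I j q = (1 : Matrix ι ι R) j q - (nystromInv K I * K) q j := by
  simp [nystromDirection, one_apply, eq_comm]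

theorem nystromDirection_apply_of_notMem {j q : ι} (hq : q ∉ insert j I) :
    nystromDirection K I j q = 0 := by
  rw [Finset.mem_insert, not_or] at hq
  simp [nystromDirection_apply, one_apply_ne' hq.1, mul_apply,
    nystromInv_apply_of_notMem_left hq.2]

theorem nystromInv_insert (hK : K.IsSymm)
    (hI : IsUnit (K.submatrix (Subtype.val : I → ι) Subtype.val).det) {j : ι} (hj : j ∉ I)
    (hs : nystromRemainder K I j j ≠ 0) :
    nystromInv K (insert j I) = nystromInv K I + (nystromRemainder K I j j)⁻¹ •
      vecMulVec (nystromDirection K I j) (nystromDirection K I j) := by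
  refine extendByZero_inv_eq_of_mul_apply (fun p q hpq => ?_) (fun p hp q _ => ?_)
  · have hnotI : ∀ r ∉ insert j I, r ∉ I := fun r hr h => hr (Finset.mem_insert_of_mem h)
    by_contra h
    rcases not_and_or.mp h with hp | hq
    · simp [nystromInv_apply_of_notMem_left (hnotI p hp), vecMulVec_apply,
        nystromDirection_apply_of_notMem hp] at hpq
    · simp [nystromInv_apply_of_notMem_right p (hnotI q hq), vecMulVec_apply,
        nystromDirection_apply_of_notMem hq] at hpq
  rw [Matrix.mul_add, Matrix.mul_smul, mul_vecMulVec, mulVec_nystromDirection, add_apply,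
    smul_apply, vecMulVec_apply, col_apply, smul_eq_mul]
  rcases Finset.mem_insert.mp hp with rfl | hp
  · have hKP : (K * nystromInv K I) p q = (nystromInv K I * K) q p := by
      rw [← transpose_apply (K * _), transpose_mul, hK.eq, hK.nystromInv.eq]
    rw [nystromDirection_apply, hKP, inv_mul_cancel_left₀ hs]
    ring
  · rw [mul_nystromInv_apply_of_mem hI hp, nystromRemainder_apply_of_mem hI hp, zero_mul,
      mul_zero, add_zero]

theorem nystromDirection_dotProduct_mul_self_mulVec (hK : K.IsSymm) (j : ι) :
    nystromDirection K I j ⬝ᵥ (K * K) *ᵥ nystromDirection K I j =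
      (nystromRemainder K I * nystromRemainder K I) j j := by
  rw [← mulVec_mulVec, dotProduct_mulVec, ← mulVec_transpose, hK.eq, mulVec_nystromDirection,
    mul_apply']
  exact congrArg (· ⬝ᵥ _) (funext fun q => hK.nystromRemainder.apply j q)

end Nystrom
end Matrix

theorem stmt_3_general (n : ℕ) (K : Matrix (Fin n) (Fin n) ℝ) (hK : K.PosSemidef)
    (I : Finset (Fin n)) (j : Fin n) (hj : j ∉ I)
    (hI : IsUnit (K.submatrix (incl I) (incl I)).det)
    (Kt : Matrix (Fin n) (Fin n) ℝ)
    (hKt : Kt = K - K.submatrix id (incl I) * (K.submatrix (incl I) (incl I))⁻¹ *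
        K.submatrix (incl I) id)
    (hKtj : 0 < Kt j j) :
    ((K * K).submatrix (incl (insert j I)) (incl (insert j I)) *
        (K.submatrix (incl (insert j I)) (incl (insert j I)))⁻¹).trace
      = ((K * K).submatrix (incl I) (incl I) *
          (K.submatrix (incl I) (incl I))⁻¹).trace
        + (Kt * Kt) j j / Kt j j := by
  have hsymm : K.IsSymm := by
    simpa [IsSymm, conjTranspose_eq_transpose_of_trivial] using hK.isHermitian
  have htrace (J : Finset (Fin n)) : ((K * K).submatrix (incl J) (incl J) *
      (K.submatrix (incl J) (incl J))⁻¹).trace = (K * K * nystromInv K J).trace :=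
    trace_submatrix_mul _ _
  obtain rfl : Kt = nystromRemainder K I :=
    hKt.trans (congrArg (K - ·) (submatrix_mul_mul_submatrix K K _))
  rw [htrace, htrace, nystromInv_insert hsymm hI hj hKtj.ne', Matrix.mul_add, trace_add,
    Matrix.mul_smul, trace_smul, mul_vecMulVec, trace_vecMulVec, dotProduct_comm,
    nystromDirection_dotProduct_mul_self_mulVec hsymm, smul_eq_mul, div_eq_inv_mul]

/-- For an SPSD matrix `K`, an index set `I` with `K_{I,I}` invertible, and `j ∉ I` with
`K_{I∪{j},I∪{j}}` invertible and `K̃_{j,j} > 0` where `K̃ = K − K_{:,I}(K_{I,I})⁻¹K_{I,:}`,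
the nuclear objective satisfies
`Tr[(K²)_{I∪{j},I∪{j}}(K_{I∪{j},I∪{j}})⁻¹] = Tr[(K²)_{I,I}(K_{I,I})⁻¹] + (K̃²)_{j,j}/K̃_{j,j}`. -/
theorem stmt_3 (n : ℕ) (K : Matrix (Fin n) (Fin n) ℝ) (hK : K.PosSemidef)
    (I : Finset (Fin n)) (j : Fin n) (hj : j ∉ I)
    (hI : IsUnit (K.submatrix (incl I) (incl I)).det)
    (hIj : IsUnit (K.submatrix (incl (insert j I)) (incl (insert j I))).det)
    (Kt : Matrix (Fin n) (Fin n) ℝ)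
    (hKt : Kt = K - K.submatrix id (incl I) * (K.submatrix (incl I) (incl I))⁻¹ *
        K.submatrix (incl I) id)
    (hKtj : 0 < Kt j j) :
    ((K * K).submatrix (incl (insert j I)) (incl (insert j I)) *
        (K.submatrix (incl (insert j I)) (incl (insert j I)))⁻¹).trace
      = ((K * K).submatrix (incl I) (incl I) *
          (K.submatrix (incl I) (incl I))⁻¹).trace
        + (Kt * Kt) j j / Kt j j :=
  stmt_3_general n K hK I j hj hI Kt hKt hKtj
end

section
/- Let L be a rescaled graph Laplacian with Lh = 0, ‖h‖₂ = 1, and K = L⁺ its Moore–Penrose pseudoinverse. For any non-empty index subset I with K_{I,I} invertible, Tr[(L_{I^c,I^c})⁻¹] = Tr[K] − Tr[(K²)_{I,I}(K_{I,I})⁻¹] + (1 + h_Iᵀ(K_{I,I})⁻¹(K²)_{I,I}(K_{I,I})⁻¹h_I) / (h_Iᵀ(K_{I,I})⁻¹h_I). -/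
/-!
Write `P = 1 - h hᵀ`. The Penrose equations and `ker L = span h` force `L K = P`, `Kᵀ = K`,
`K h = 0` and `K ⪰ 0`. The rows of `L K = P` indexed by `Iᶜ` show that
`(L_{Iᶜ,Iᶜ})⁻¹ = S + β⁻¹ z zᵀ`, where `S = K_{Iᶜ,Iᶜ} - K_{Iᶜ,I} K_{I,I}⁻¹ K_{I,Iᶜ}` is the Schur
complement of `K_{I,I}` in `K`, `z = h_{Iᶜ} - K_{Iᶜ,I} K_{I,I}⁻¹ h_I` and
`β = h_Iᵀ K_{I,I}⁻¹ h_I > 0`. Taking traces, `(K²)_{I,I} = K_{I,I}² + K_{I,Iᶜ} K_{Iᶜ,I}` gives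
`Tr S = Tr K - Tr[(K²)_{I,I} K_{I,I}⁻¹]`, and `K h = 0` gives
`‖z‖² = 1 + h_Iᵀ K_{I,I}⁻¹ (K²)_{I,I} K_{I,I}⁻¹ h_I`.
-/

open Matrix BigOperators

/-- The inclusion of the complement of a finite set of indices. -/
def inclC {n : ℕ} (J : Finset (Fin n)) : {x // x ∉ J} → Fin n := fun j => j

section Split

variable {R : Type*} {n : ℕ} (I : Finset (Fin n))

theorem sum_eq_sum_incl_add_sum_inclC [AddCommMonoid R] (F : Fin n → R) :
    ∑ k, F k = ∑ k, F (incl I k) + ∑ k, F (inclC I k) := by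
  convert (Fintype.sum_subtype_add_sum_subtype (· ∈ I) F).symm <;> rfl

theorem trace_eq_incl_add_inclC [AddCommMonoid R] (A : Matrix (Fin n) (Fin n) R) :
    A.trace = (A.submatrix (incl I) (incl I)).trace + (A.submatrix (inclC I) (inclC I)).trace :=
  sum_eq_sum_incl_add_sum_inclC I _

theorem one_submatrix_inclC_incl [Zero R] [One R] :
    (1 : Matrix (Fin n) (Fin n) R).submatrix (inclC I) (incl I) = 0 := by
  ext i j
  exact one_apply_ne fun hij => i.2 ((show (i : Fin n) = j from hij) ▸ j.2)

variable [NonUnitalNonAssocSemiring R] {α β : Type*}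

theorem submatrix_mul_eq_incl_add_inclC (A B : Matrix (Fin n) (Fin n) R) (f : α → Fin n)
    (g : β → Fin n) :
    (A * B).submatrix f g = A.submatrix f (incl I) * B.submatrix (incl I) g
      + A.submatrix f (inclC I) * B.submatrix (inclC I) g := by
  ext i j
  exact sum_eq_sum_incl_add_sum_inclC I _

theorem comp_mulVec_eq_incl_add_inclC (A : Matrix (Fin n) (Fin n) R) (x : Fin n → R)
    (f : α → Fin n) :
    (A *ᵥ x) ∘ f = A.submatrix f (incl I) *ᵥ (x ∘ incl I)
      + A.submatrix f (inclC I) *ᵥ (x ∘ inclC I) := by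
  ext i
  exact sum_eq_sum_incl_add_sum_inclC I _

theorem dotProduct_eq_incl_add_inclC (x y : Fin n → R) :
    x ⬝ᵥ y = (x ∘ incl I) ⬝ᵥ (y ∘ incl I) + (x ∘ inclC I) ⬝ᵥ (y ∘ inclC I) :=
  sum_eq_sum_incl_add_sum_inclC I _

end Split

/-- The Penrose equations; over `ℝ` they characterise the Moore–Penrose pseudoinverse `X = A⁺`. -/
structure IsPenroseInverse {m p : Type*} [Fintype m] [Fintype p]
    (A : Matrix m p ℝ) (X : Matrix p m ℝ) : Prop where
  penrose₁ : A * X * A = A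
  penrose₂ : X * A * X = X
  penrose₃ : (A * X)ᵀ = A * X
  penrose₄ : (X * A)ᵀ = X * A

section PenroseInverse

variable {ι : Type*} [Fintype ι] {L K : Matrix ι ι ℝ} {h : ι → ℝ}

theorem eq_zero_of_mul_eq_zero_of_mulVec_eq_zero (hL : L.IsSymm)
    (hker : ∀ x, L *ᵥ x = 0 → ∃ c : ℝ, x = c • h) (hh : h ⬝ᵥ h = 1)
    {Q : Matrix ι ι ℝ} (hQL : Q * L = 0) (hQh : Q *ᵥ h = 0) : Q = 0 := by
  funext j
  obtain ⟨c, hc⟩ := hker (Q j) (by rw [← hL.eq, mulVec_transpose]; exact congrFun hQL j)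
  have hc0 : c = 0 := by
    have hQhj : Q j ⬝ᵥ h = 0 := congrFun hQh j
    rwa [hc, smul_dotProduct, hh, smul_eq_mul, mul_one] at hQhj
  rw [hc, hc0, zero_smul]
  rfl

namespace IsPenroseInverse

theorem mulVec_eq_zero (hK : IsPenroseInverse L K) (hL : L.IsSymm) (hLh : L *ᵥ h = 0) :
    K *ᵥ h = 0 := by
  have hK' : K = K * Kᵀ * L := by
    conv_lhs => rw [← hK.penrose₂, Matrix.mul_assoc, ← hK.penrose₃, transpose_mul, hL.eq,
      ← Matrix.mul_assoc]
  rw [hK', ← mulVec_mulVec, hLh, mulVec_zero]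

theorem transpose_mulVec_eq_zero (hK : IsPenroseInverse L K) (hLh : L *ᵥ h = 0) :
    Kᵀ *ᵥ h = 0 := by
  have hK' : Kᵀ = Kᵀ * K * L := by
    conv_lhs => rw [← hK.penrose₂, transpose_mul, hK.penrose₄, ← Matrix.mul_assoc]
  rw [hK', ← mulVec_mulVec, hLh, mulVec_zero]

theorem posSemidef (hK : IsPenroseInverse L K) (hL : L.PosSemidef)
    (hKsym : K.IsSymm) : K.PosSemidef := by
  refine posSemidef_iff_dotProduct_mulVec.mpr ⟨isHermitian_iff_isSymm.mpr hKsym, fun x => ?_⟩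
  have hKLK : x ⬝ᵥ K *ᵥ x = K *ᵥ x ⬝ᵥ L *ᵥ K *ᵥ x := by
    conv_lhs => rw [← hK.penrose₂, ← mulVec_mulVec, ← mulVec_mulVec]
    rw [dotProduct_mulVec, ← mulVec_transpose, hKsym.eq]
  simpa [star_trivial, hKLK] using hL.dotProduct_mulVec_nonneg (K *ᵥ x)

variable [DecidableEq ι]

theorem mul_eq_one_sub (hK : IsPenroseInverse L K) (hL : L.IsSymm) (hLh : L *ᵥ h = 0)
    (hker : ∀ x, L *ᵥ x = 0 → ∃ c : ℝ, x = c • h) (hh : h ⬝ᵥ h = 1) :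
    L * K = 1 - vecMulVec h h := by
  have hQL : (1 - vecMulVec h h - L * K) * L = 0 := by
    rw [sub_mul, sub_mul, one_mul, vecMulVec_mul, ← mulVec_transpose, hL.eq, hLh,
      vecMulVec_zero, hK.penrose₁, sub_zero, sub_self]
  have hQh : (1 - vecMulVec h h - L * K) *ᵥ h = 0 := by
    rw [sub_mulVec, sub_mulVec, one_mulVec, vecMulVec_mulVec, hh, ← mulVec_mulVec,
      hK.mulVec_eq_zero hL hLh, mulVec_zero]
    simp
  exact (sub_eq_zero.mp (eq_zero_of_mul_eq_zero_of_mulVec_eq_zero hL hker hh hQL hQh)).symm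

theorem isSymm (hK : IsPenroseInverse L K) (hL : L.IsSymm) (hLh : L *ᵥ h = 0)
    (hker : ∀ x, L *ᵥ x = 0 → ∃ c : ℝ, x = c • h) (hh : h ⬝ᵥ h = 1) : K.IsSymm := by
  have hLK := hK.mul_eq_one_sub hL hLh hker hh
  have hKtL : Kᵀ * L = L * K := by rw [← hK.penrose₃, transpose_mul, hL.eq]
  have hKth := hK.transpose_mulVec_eq_zero hLh
  calc Kᵀ = Kᵀ * (1 - vecMulVec h h) := by
        rw [mul_sub, mul_one, mul_vecMulVec, hKth, zero_vecMulVec, sub_zero]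
    _ = (1 - vecMulVec h h) * K := by rw [← hLK, ← Matrix.mul_assoc, hKtL, hLK]
    _ = K := by
        rw [sub_mul, one_mul, vecMulVec_mul, ← mulVec_transpose, hKth, vecMulVec_zero, sub_zero]

end IsPenroseInverse

end PenroseInverse

theorem Matrix.trace_mul_inv_mul_eq {p q R : Type*} [Fintype p] [Fintype q] [DecidableEq p]
    [CommRing R] {X : Matrix p p R} (B : Matrix p q R) (C : Matrix q p R) (hX : IsUnit X.det) :
    (C * X⁻¹ * B).trace = ((X * X + B * C) * X⁻¹).trace - X.trace := by
  rw [trace_mul_comm, ← Matrix.mul_assoc, add_mul, trace_add, Matrix.mul_assoc X,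
    mul_nonsing_inv _ hX, mul_one, add_sub_cancel_left]

theorem Matrix.PosSemidef.dotProduct_inv_mulVec_pos {p : Type*} [Fintype p] [DecidableEq p]
    {X : Matrix p p ℝ} (hX : X.PosSemidef) (hXu : IsUnit X.det) {v : p → ℝ} (hv : v ≠ 0) :
    0 < v ⬝ᵥ X⁻¹ *ᵥ v := by
  have hXpd : X.PosDef := hX.posDef_iff_isUnit.mpr ((isUnit_iff_isUnit_det X).mpr hXu)
  simpa [star_trivial] using hXpd.inv.dotProduct_mulVec_pos hv

noncomputable def schurComplVec {n : ℕ} (I : Finset (Fin n)) (K : Matrix (Fin n) (Fin n) ℝ)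
    (h : Fin n → ℝ) : {x // x ∉ I} → ℝ :=
  h ∘ inclC I - K.submatrix (inclC I) (incl I) *ᵥ (K.submatrix (incl I) (incl I))⁻¹ *ᵥ (h ∘ incl I)

section Blocks

variable {n : ℕ} (I : Finset (Fin n)) {L K : Matrix (Fin n) (Fin n) ℝ} {h : Fin n → ℝ}

theorem submatrix_inclC_mul_eq_sub {α : Type*} (hLK : L * K = 1 - vecMulVec h h)
    (g : α → Fin n) :
    L.submatrix (inclC I) (inclC I) * K.submatrix (inclC I) g
      = (1 : Matrix (Fin n) (Fin n) ℝ).submatrix (inclC I) g - vecMulVec (h ∘ inclC I) (h ∘ g)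
        - L.submatrix (inclC I) (incl I) * K.submatrix (incl I) g := by
  rw [eq_sub_iff_add_eq, add_comm, ← submatrix_mul_eq_incl_add_inclC, hLK]
  rfl

theorem submatrix_inclC_mul_schurComplement (hLK : L * K = 1 - vecMulVec h h) (hK : K.IsSymm)
    (hX : IsUnit (K.submatrix (incl I) (incl I)).det) :
    L.submatrix (inclC I) (inclC I) * (K.submatrix (inclC I) (inclC I)
        - K.submatrix (inclC I) (incl I) * (K.submatrix (incl I) (incl I))⁻¹
          * K.submatrix (incl I) (inclC I))
      = 1 - vecMulVec (h ∘ inclC I) (schurComplVec I K h) := by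
  have hDE := submatrix_inclC_mul_eq_sub I hLK (inclC I)
  have hDC := submatrix_inclC_mul_eq_sub I hLK (incl I)
  rw [submatrix_one (inclC I) Subtype.val_injective] at hDE
  rw [one_submatrix_inclC_incl, zero_sub] at hDC
  have hXt : (K.submatrix (incl I) (incl I))⁻¹ᵀ = (K.submatrix (incl I) (incl I))⁻¹ := by
    rw [transpose_nonsing_inv, (hK.submatrix _).eq]
  have hBt : (K.submatrix (incl I) (inclC I))ᵀ = K.submatrix (inclC I) (incl I) := by
    rw [transpose_submatrix, hK.eq]
  rw [Matrix.mul_sub, ← Matrix.mul_assoc, ← Matrix.mul_assoc, hDE, hDC, Matrix.sub_mul,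
    Matrix.sub_mul, mul_nonsing_inv_cancel_right _ _ hX, Matrix.neg_mul, Matrix.neg_mul,
    vecMulVec_mul, vecMulVec_mul, vecMul_vecMul, ← mulVec_transpose, transpose_mul, hBt, hXt,
    ← mulVec_mulVec, schurComplVec, vecMulVec_sub]
  abel

theorem submatrix_inclC_mulVec_schurComplVec (hLK : L * K = 1 - vecMulVec h h)
    (hLh : L *ᵥ h = 0) (hX : IsUnit (K.submatrix (incl I) (incl I)).det) :
    L.submatrix (inclC I) (inclC I) *ᵥ schurComplVec I K h
      = ((h ∘ incl I) ⬝ᵥ (K.submatrix (incl I) (incl I))⁻¹ *ᵥ (h ∘ incl I)) • (h ∘ inclC I) := by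
  have hDC := submatrix_inclC_mul_eq_sub I hLK (incl I)
  rw [one_submatrix_inclC_incl, zero_sub] at hDC
  have hDu := comp_mulVec_eq_incl_add_inclC I L h (inclC I)
  rw [hLh, Pi.zero_comp, eq_comm, add_eq_zero_iff_eq_neg'] at hDu
  rw [schurComplVec, mulVec_sub, hDu, mulVec_mulVec, hDC, sub_mulVec, neg_mulVec,
    vecMulVec_mulVec, op_smul_eq_smul, ← mulVec_mulVec,
    mulVec_mulVec _ _ (K.submatrix (incl I) (incl I))⁻¹, mul_nonsing_inv _ hX, one_mulVec]
  abel

theorem inv_submatrix_inclC (hLK : L * K = 1 - vecMulVec h h) (hK : K.IsSymm)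
    (hLh : L *ᵥ h = 0) (hX : IsUnit (K.submatrix (incl I) (incl I)).det)
    (hβ : (h ∘ incl I) ⬝ᵥ (K.submatrix (incl I) (incl I))⁻¹ *ᵥ (h ∘ incl I) ≠ 0) :
    (L.submatrix (inclC I) (inclC I))⁻¹
      = K.submatrix (inclC I) (inclC I)
          - K.submatrix (inclC I) (incl I) * (K.submatrix (incl I) (incl I))⁻¹
            * K.submatrix (incl I) (inclC I)
          + ((h ∘ incl I) ⬝ᵥ (K.submatrix (incl I) (incl I))⁻¹ *ᵥ (h ∘ incl I))⁻¹
            • vecMulVec (schurComplVec I K h) (schurComplVec I K h) := by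
  refine inv_eq_right_inv ?_
  rw [mul_add, submatrix_inclC_mul_schurComplement I hLK hK hX, Matrix.mul_smul, mul_vecMulVec,
    submatrix_inclC_mulVec_schurComplVec I hLK hLh hX, smul_vecMulVec, smul_smul,
    inv_mul_cancel₀ hβ, one_smul, sub_add_cancel]

theorem schurComplVec_dotProduct_self (hKh : K *ᵥ h = 0) (hK : K.IsSymm) (hh : h ⬝ᵥ h = 1)
    (hX : IsUnit (K.submatrix (incl I) (incl I)).det) :
    schurComplVec I K h ⬝ᵥ schurComplVec I K h
      = 1 + (h ∘ incl I) ⬝ᵥ ((K.submatrix (incl I) (incl I))⁻¹ * (K * K).submatrix (incl I) (incl I)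
          * (K.submatrix (incl I) (incl I))⁻¹) *ᵥ (h ∘ incl I) := by
  have hY := submatrix_mul_eq_incl_add_inclC I K K (incl I) (incl I)
  have hBu := comp_mulVec_eq_incl_add_inclC I K h (incl I)
  rw [hKh, Pi.zero_comp, eq_comm, add_eq_zero_iff_eq_neg'] at hBu
  have hXt : (K.submatrix (incl I) (incl I))ᵀ = K.submatrix (incl I) (incl I) :=
    (hK.submatrix _).eq
  have hCt : (K.submatrix (inclC I) (incl I))ᵀ = K.submatrix (incl I) (inclC I) := by
    rw [transpose_submatrix, hK.eq]
  have huv : (h ∘ inclC I) ⬝ᵥ (h ∘ inclC I) + (h ∘ incl I) ⬝ᵥ (h ∘ incl I) = 1 := by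
    rw [add_comm, ← dotProduct_eq_incl_add_inclC, hh]
  rw [schurComplVec]
  set X := K.submatrix (incl I) (incl I)
  set C := K.submatrix (inclC I) (incl I)
  set u := h ∘ inclC I
  set v := h ∘ incl I
  set w := X⁻¹ *ᵥ v with hw
  have hXw : X *ᵥ w = v := by rw [hw, mulVec_mulVec, mul_nonsing_inv _ hX, one_mulVec]
  have huCw : u ⬝ᵥ C *ᵥ w = -(v ⬝ᵥ v) := by
    rw [dotProduct_mulVec, ← mulVec_transpose, hCt, hBu, neg_dotProduct, dotProduct_comm,
      ← dotProduct_transpose_mulVec, hXt, hXw]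
  have hCw : C *ᵥ w ⬝ᵥ C *ᵥ w = w ⬝ᵥ (K * K).submatrix (incl I) (incl I) *ᵥ w - v ⬝ᵥ v := by
    rw [hY, add_mulVec, dotProduct_add, ← mulVec_mulVec, ← mulVec_mulVec, hXw,
      dotProduct_mulVec w X, ← mulVec_transpose, hXt, hXw, ← dotProduct_transpose_mulVec, hCt]
    ring
  have hwYw : w ⬝ᵥ (K * K).submatrix (incl I) (incl I) *ᵥ w
      = v ⬝ᵥ (X⁻¹ * (K * K).submatrix (incl I) (incl I) * X⁻¹) *ᵥ v := by
    rw [← mulVec_mulVec, ← mulVec_mulVec, ← hw, dotProduct_mulVec v, ← mulVec_transpose,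
      transpose_nonsing_inv, hXt, ← hw]
  rw [sub_dotProduct, dotProduct_sub, dotProduct_sub, dotProduct_comm (C *ᵥ w) u, huCw, hCw,
    hwYw]
  linarith

end Blocks

/-- Complementary trace formulation for inverse Laplacians: for a rescaled Laplacian `L`
(symmetric PSD, connected, kernel spanned by the entrywise positive unit vector `h`) and
`K = L⁺` its Moore–Penrose pseudoinverse (characterized by the Penrose conditions), for
any nonempty index set `I` with `K_{I,I}` invertible,
`Tr[(L_{I^c,I^c})⁻¹] = Tr[K] − Tr[(K²)_{I,I}(K_{I,I})⁻¹]
  + (1 + h_Iᵀ(K_{I,I})⁻¹(K²)_{I,I}(K_{I,I})⁻¹h_I) / (h_Iᵀ(K_{I,I})⁻¹h_I)`. -/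
theorem stmt_4 (n : ℕ) (L K : Matrix (Fin n) (Fin n) ℝ) (h : Fin n → ℝ)
    (hL : L.PosSemidef) (hLh : L *ᵥ h = 0) (hnorm : ∑ i, h i ^ 2 = 1)
    (hpos : ∀ i, 0 < h i)
    (hker : ∀ x : Fin n → ℝ, L *ᵥ x = 0 → ∃ c : ℝ, x = c • h)
    (pen1 : L * K * L = L) (pen2 : K * L * K = K)
    (pen3 : (L * K)ᵀ = L * K) (pen4 : (K * L)ᵀ = K * L)
    (I : Finset (Fin n)) (hI : I.Nonempty)
    (hKI : IsUnit (K.submatrix (incl I) (incl I)).det) :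
    (let KII := K.submatrix (incl I) (incl I)
     let K2II := (K * K).submatrix (incl I) (incl I)
     let hI : {x // x ∈ I} → ℝ := fun i => h i
     ((L.submatrix (inclC I) (inclC I))⁻¹).trace
       = K.trace - (K2II * KII⁻¹).trace
         + (1 + hI ⬝ᵥ ((KII⁻¹ * K2II * KII⁻¹) *ᵥ hI)) / (hI ⬝ᵥ (KII⁻¹ *ᵥ hI))) := by
  have hLsym : L.IsSymm := isHermitian_iff_isSymm.mp hL.1
  have hh : h ⬝ᵥ h = 1 := by simpa [dotProduct, sq] using hnorm
  have hK : IsPenroseInverse L K := ⟨pen1, pen2, pen3, pen4⟩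
  have hLK := hK.mul_eq_one_sub hLsym hLh hker hh
  have hKsym := hK.isSymm hLsym hLh hker hh
  have hβ : 0 < (h ∘ incl I) ⬝ᵥ (K.submatrix (incl I) (incl I))⁻¹ *ᵥ (h ∘ incl I) := by
    obtain ⟨i, hi⟩ := hI
    refine ((hK.posSemidef hL hKsym).submatrix _).dotProduct_inv_mulVec_pos hKI fun h0 => ?_
    exact (hpos i).ne' (congrFun h0 ⟨i, hi⟩)
  dsimp only
  rw [show (fun i : {x // x ∈ I} => h i) = h ∘ incl I from rfl,
    inv_submatrix_inclC I hLK hKsym hLh hKI hβ.ne', trace_add, trace_sub, trace_smul,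
    trace_vecMulVec, schurComplVec_dotProduct_self I (hK.mulVec_eq_zero hLsym hLh) hKsym hh hKI,
    trace_mul_inv_mul_eq _ _ hKI, ← submatrix_mul_eq_incl_add_inclC, trace_eq_incl_add_inclC I K,
    smul_eq_mul, div_eq_inv_mul]
  ring
end

section
/- Suppose real numbers y₁,...,y_k and parameters R ≥ 0, f₁,...,f_k > 1 satisfy R ≤ y₁ + ... + y_{t−1} + f_t y_t for all t = 1,...,k. Then 1 − (y₁ + ... + y_k)/R < exp(−(1/f₁ + ... + 1/f_k)), provided R > 0. -/
open BigOperators Finset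

/-!
Write `Rₜ = R - (y₁ + ⋯ + yₜ)` for what is left of `R` after `t` steps. The `t`-th constraint
says `R_{t-1} ≤ fₜ yₜ`, so `Rₜ = R_{t-1} - yₜ ≤ (1 - 1/fₜ) R_{t-1}`. Hence
`1 - (y₁ + ⋯ + y_k)/R = R_k/R ≤ ∏ (1 - 1/fₜ)`, and `1 - x < e^{-x}` for `x ≠ 0` finishes.
-/

lemma sub_le_mul_one_sub_inv {a y f : ℝ} (hf : 0 < f) (h : a ≤ f * y) :
    a - y ≤ a * (1 - f⁻¹) := by
  have : a / f ≤ y := by rwa [div_le_iff₀ hf, mul_comm]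
  calc a - y ≤ a - a / f := by linarith
    _ = a * (1 - f⁻¹) := by ring

lemma sub_sum_range_le_mul_prod {y f : ℕ → ℝ} {R : ℝ} {n : ℕ}
    (hf : ∀ t < n, 1 ≤ f t) (h : ∀ t < n, R ≤ ∑ i ∈ range t, y i + f t * y t) :
    R - ∑ i ∈ range n, y i ≤ R * ∏ i ∈ range n, (1 - (f i)⁻¹) := by
  induction n with
  | zero => simp
  | succ n ih =>
    have hfn : 1 ≤ f n := hf n n.lt_succ_self
    have step : R - ∑ i ∈ range n, y i - y n ≤ (R - ∑ i ∈ range n, y i) * (1 - (f n)⁻¹) :=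
      sub_le_mul_one_sub_inv (by linarith) (by linarith [h n n.lt_succ_self])
    have ih' := ih (fun t ht => hf t (by omega)) (fun t ht => h t (by omega))
    have hfactor : 0 ≤ 1 - (f n)⁻¹ := sub_nonneg.2 (inv_le_one_of_one_le₀ hfn)
    rw [sum_range_succ, prod_range_succ, ← mul_assoc, ← sub_sub]
    exact step.trans (mul_le_mul_of_nonneg_right ih' hfactor)

lemma prod_one_sub_lt_exp_neg_sum {ι : Type*} {s : Finset ι} {x : ι → ℝ} (hs : s.Nonempty)
    (hx₀ : ∀ i ∈ s, x i ≠ 0) (hx₁ : ∀ i ∈ s, x i < 1) :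
    ∏ i ∈ s, (1 - x i) < Real.exp (-∑ i ∈ s, x i) := by
  rw [← sum_neg_distrib, Real.exp_sum]
  refine prod_lt_prod_of_nonempty (fun i hi => by linarith [hx₁ i hi]) (fun i hi => ?_) hs
  linarith [Real.add_one_lt_exp (neg_ne_zero.2 (hx₀ i hi))]

lemma Fin.sum_filter_lt_eq_sum_range {M : Type*} [AddCommMonoid M] {k : ℕ} (g : ℕ → M)
    (t : Fin k) : ∑ i ∈ univ.filter (· < t), g i = ∑ i ∈ range t, g i := by
  rw [filter_gt_eq_Iio, ← Nat.Iio_eq_range, ← Fin.map_valEmbedding_Iio, sum_map]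
  rfl

/-- Generalized linear programming bound: if `R ≤ y₁ + ... + y_{t−1} + f_t y_t`
for all `t = 1, ..., k` with `R > 0` and each `f_t > 1`, then
`1 − (y₁ + ... + y_k)/R < exp(−(1/f₁ + ... + 1/f_k))`. -/
theorem stmt_5 (k : ℕ) (hk : 0 < k) (y f : Fin k → ℝ) (R : ℝ) (hR : 0 < R)
    (hf : ∀ t, 1 < f t)
    (hineq : ∀ t : Fin k, R ≤ (∑ i ∈ Finset.univ.filter (· < t), y i) + f t * y t) :
    1 - (∑ i, y i) / R < Real.exp (-∑ i, (f i)⁻¹) := by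
  set Y : ℕ → ℝ := fun n => if h : n < k then y ⟨n, h⟩ else 0
  set F : ℕ → ℝ := fun n => if h : n < k then f ⟨n, h⟩ else 1
  have hyY (i : Fin k) : y i = Y i := by simp [Y]
  have hfF (i : Fin k) : f i = F i := by simp [F]
  have hremain : R - ∑ i, y i ≤ R * ∏ i, (1 - (f i)⁻¹) := by
    simp only [hyY, hfF]
    rw [Fin.sum_univ_eq_sum_range, Fin.prod_univ_eq_prod_range (fun i => 1 - (F i)⁻¹)]
    refine sub_sum_range_le_mul_prod (fun t ht => ?_) (fun t ht => ?_)
    · simpa [hfF] using (hf ⟨t, ht⟩).le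
    · simpa [hyY, hfF, Fin.sum_filter_lt_eq_sum_range] using hineq ⟨t, ht⟩
  have hprod := prod_one_sub_lt_exp_neg_sum (s := univ) (x := fun i => (f i)⁻¹)
    (univ_nonempty_iff.2 (Fin.pos_iff_nonempty.1 hk))
    (fun i _ => inv_ne_zero (by linarith [hf i])) (fun i _ => inv_lt_one_of_one_lt₀ (hf i))
  calc 1 - (∑ i, y i) / R = (R - ∑ i, y i) / R := by field_simp
    _ ≤ ∏ i, (1 - (f i)⁻¹) := by rw [div_le_iff₀ hR]; linarith
    _ < Real.exp (-∑ i, (f i)⁻¹) := hprod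
end

section
/- Let x be a vector of n positive reals and e_k the k-th elementary symmetric polynomial with e₀ = 1. Then for 0 ≤ k ≤ n−1, defining D_k(x) := e₁(x) − (k+1)e_{k+1}(x)/e_k(x), one has D_k(x) < D_{k+1}(x). -/
/-!
Clearing denominators, `D_k < D_{k+1}` is the strict Newton inequality
`(k+2) e_k e_{k+2} < (k+1) e_{k+1}²`. It is proved by induction on the multiset of variables:
adjoining a variable `y` gives `e'_j = e_j + y e_{j-1}`, and the difference of the two sides
becomes a polynomial in `y` whose coefficients are nonnegative by the inequality at `k` and
`k - 1`. The coefficient of `y²` exceeds what is needed by `e_k² / (k+1)`, which yields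
strictness as soon as `y e_k ≠ 0`.
-/

open BigOperators

/-- The elementary symmetric polynomial of degree `k` in the entries of `x`. -/
noncomputable def esym {n : ℕ} (k : ℕ) (x : Fin n → ℝ) : ℝ :=
  ∑ S ∈ Finset.univ.powersetCard k, ∏ i ∈ S, x i

section NewtonStep

variable {K : Type*} [Field K] [LinearOrder K] [IsStrictOrderedRing K]

-- `e₀, …, e₃` stand for `e_{k-1}, …, e_{k+2}` of the old variables and `y` for the new one.
theorem newton_inequality_step {k y e₀ e₁ e₂ e₃ : K} (hk : 0 ≤ k) (hy : 0 ≤ y)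
    (h₁ : 0 ≤ e₁) (h₂ : 0 ≤ e₂) (h₃ : 0 ≤ e₃)
    (hlo : (k + 1) * e₀ * e₂ ≤ k * e₁ ^ 2) (hhi : (k + 2) * e₁ * e₃ ≤ (k + 1) * e₂ ^ 2)
    (hz : e₁ * e₂ = 0 → e₃ = 0) :
    (k + 2) * (e₁ + y * e₀) * (e₃ + y * e₂) + (y * e₁) ^ 2 / (k + 1)
      ≤ (k + 1) * (e₂ + y * e₁) ^ 2 := by
  have hk₁ : 0 < k + 1 := by linarith
  have cross : (k + 2) * e₀ * e₃ ≤ k * e₁ * e₂ := by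
    obtain h | h := (mul_nonneg h₁ h₂).eq_or_lt
    · rw [hz h.symm, mul_zero, mul_assoc]
      positivity
    · refine le_of_mul_le_mul_right ?_ (mul_pos hk₁ h)
      calc (k + 2) * e₀ * e₃ * ((k + 1) * (e₁ * e₂))
          = ((k + 1) * e₀ * e₂) * ((k + 2) * e₁ * e₃) := by ring
        _ ≤ (k * e₁ ^ 2) * ((k + 1) * e₂ ^ 2) :=
          mul_le_mul hlo hhi (by positivity) (by positivity)
        _ = k * e₁ * e₂ * ((k + 1) * (e₁ * e₂)) := by ring
  have square : (k + 2) * e₀ * e₂ + e₁ ^ 2 / (k + 1) ≤ (k + 1) * e₁ ^ 2 := by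
    have hdiff : (k + 1) * e₁ ^ 2 - ((k + 2) * e₀ * e₂ + e₁ ^ 2 / (k + 1))
        = (k + 2) / (k + 1) * (k * e₁ ^ 2 - (k + 1) * e₀ * e₂) := by
      field_simp
      ring
    rw [← sub_nonneg, hdiff]
    exact mul_nonneg (by positivity) (sub_nonneg.2 hlo)
  calc (k + 2) * (e₁ + y * e₀) * (e₃ + y * e₂) + (y * e₁) ^ 2 / (k + 1)
      = (k + 2) * e₁ * e₃ + y * ((k + 2) * e₁ * e₂ + (k + 2) * e₀ * e₃)
        + y ^ 2 * ((k + 2) * e₀ * e₂ + e₁ ^ 2 / (k + 1)) := by ring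
    _ ≤ (k + 1) * e₂ ^ 2 + y * ((k + 2) * e₁ * e₂ + k * e₁ * e₂)
        + y ^ 2 * ((k + 1) * e₁ ^ 2) := by gcongr
    _ = (k + 1) * (e₂ + y * e₁) ^ 2 := by ring

end NewtonStep

namespace Multiset

section CommSemiring

variable {R : Type*} [CommSemiring R]

theorem esymm_zero_right (s : Multiset R) : s.esymm 0 = 1 := by
  simp [esymm, powersetCard_zero_left]

theorem esymm_cons_succ (a : R) (s : Multiset R) (k : ℕ) :
    (a ::ₘ s).esymm (k + 1) = s.esymm (k + 1) + a * s.esymm k := by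
  simp [esymm, powersetCard_cons, map_map, prod_cons, sum_map_mul_left]

theorem esymm_eq_zero_of_card_lt {s : Multiset R} {k : ℕ} (h : card s < k) : s.esymm k = 0 := by
  simp [esymm, powersetCard_eq_empty k h]

end CommSemiring

section OrderedSemiring

variable {R : Type*} [CommSemiring R] [PartialOrder R]

theorem esymm_nonneg [IsOrderedRing R] {s : Multiset R} (hs : ∀ a ∈ s, 0 ≤ a) (k : ℕ) :
    0 ≤ s.esymm k := by
  refine sum_nonneg fun p hp => ?_
  obtain ⟨t, ht, rfl⟩ := mem_map.1 hp
  exact prod_nonneg fun a ha => hs a (mem_of_le (mem_powersetCard.1 ht).1 ha)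

variable [IsStrictOrderedRing R]

theorem esymm_pos {s : Multiset R} (hs : ∀ a ∈ s, 0 < a) {k : ℕ} (hk : k ≤ card s) :
    0 < s.esymm k := by
  induction s using Multiset.induction_on generalizing k with
  | empty => simp_all [esymm_zero_right]
  | cons a s ih =>
    rcases k with _ | k
    · simp [esymm_zero_right]
    · have hs' : ∀ b ∈ s, 0 < b := fun b hb => hs b (mem_cons_of_mem hb)
      rw [esymm_cons_succ]
      exact add_pos_of_nonneg_of_pos (esymm_nonneg (fun b hb => (hs' b hb).le) _)
        (mul_pos (hs a (mem_cons_self a s)) (ih hs' (by simpa using hk)))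

theorem esymm_eq_zero_iff {s : Multiset R} (hs : ∀ a ∈ s, 0 < a) {k : ℕ} :
    s.esymm k = 0 ↔ card s < k :=
  ⟨fun h => not_le.1 fun hk => (esymm_pos hs hk).ne' h, esymm_eq_zero_of_card_lt⟩

end OrderedSemiring

section Newton

variable {K : Type*} [Field K] [LinearOrder K] [IsStrictOrderedRing K]

theorem newton_esymm_cons {a : K} {t : Multiset K} (ha : 0 ≤ a) (ht : ∀ b ∈ t, 0 < b)
    (hN : ∀ j : ℕ, (j + 2 : K) * t.esymm j * t.esymm (j + 2) ≤ (j + 1) * t.esymm (j + 1) ^ 2)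
    (k : ℕ) :
    (k + 2 : K) * (a ::ₘ t).esymm k * (a ::ₘ t).esymm (k + 2) + (a * t.esymm k) ^ 2 / (k + 1)
      ≤ (k + 1) * (a ::ₘ t).esymm (k + 1) ^ 2 := by
  have hnn : ∀ j, 0 ≤ t.esymm j := esymm_nonneg fun b hb => (ht b hb).le
  have hz : ∀ j, t.esymm j * t.esymm (j + 1) = 0 → t.esymm (j + 2) = 0 := by
    intro j h
    rw [mul_eq_zero, esymm_eq_zero_iff ht, esymm_eq_zero_iff ht] at h
    rw [esymm_eq_zero_iff ht]
    omega
  rcases k with _ | j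
  · -- `e_{-1} = 0`
    simpa [esymm_zero_right, esymm_cons_succ] using
      newton_inequality_step (k := 0) (y := a) (e₀ := 0) (e₁ := 1) le_rfl ha zero_le_one
        (hnn 1) (hnn 2) (by simp) (by simpa [esymm_zero_right] using hN 0)
        (by simpa [esymm_zero_right] using hz 0)
  · have hN' := hN (j + 1)
    simp only [Nat.cast_add, Nat.cast_one, add_assoc, Nat.reduceAdd] at hN'
    have := newton_inequality_step (k := (j + 1 : K)) (y := a) (e₀ := t.esymm j)
      (e₁ := t.esymm (j + 1)) (e₂ := t.esymm (j + 2)) (e₃ := t.esymm (j + 3))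
      (by positivity) ha (hnn _) (hnn _) (hnn _)
      (by linear_combination hN j) (by linear_combination hN') (hz (j + 1))
    simp only [esymm_cons_succ, Nat.cast_add, Nat.cast_one, add_assoc, Nat.reduceAdd]
    linear_combination this

theorem newton_esymm_le {s : Multiset K} (hs : ∀ a ∈ s, 0 < a) (k : ℕ) :
    (k + 2 : K) * s.esymm k * s.esymm (k + 2) ≤ (k + 1) * s.esymm (k + 1) ^ 2 := by
  induction s using Multiset.induction_on generalizing k with
  | empty =>
    rw [esymm_eq_zero_of_card_lt (s := 0) (k := k + 2) (by simp), mul_zero]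
    positivity
  | cons a t ih =>
    have ht : ∀ b ∈ t, 0 < b := fun b hb => hs b (mem_cons_of_mem hb)
    exact le_of_add_le_of_nonneg_left
      (newton_esymm_cons (hs a (mem_cons_self a t)).le ht (ih ht) k) (by positivity)

theorem newton_esymm_lt {s : Multiset K} (hs : ∀ a ∈ s, 0 < a) {k : ℕ} (hk : k + 1 ≤ card s) :
    (k + 2 : K) * s.esymm k * s.esymm (k + 2) < (k + 1) * s.esymm (k + 1) ^ 2 := by
  obtain ⟨a, ha⟩ := card_pos_iff_exists_mem.1 (by omega : 0 < card s)
  obtain ⟨t, rfl⟩ := exists_cons_of_mem ha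
  have ht : ∀ b ∈ t, 0 < b := fun b hb => hs b (mem_cons_of_mem hb)
  have hgap : 0 < (a * t.esymm k) ^ 2 / (k + 1) := by
    have := hs a ha
    have := esymm_pos ht (by simpa using hk)
    positivity
  linarith [newton_esymm_cons (hs a ha).le ht (newton_esymm_le ht) k]

end Newton

end Multiset

/-- Monotonicity of the k-DPP expectation: for a vector `x` of `n` positive reals and
`0 ≤ k ≤ n − 1`, with `D_k(x) := e₁(x) − (k+1) e_{k+1}(x)/e_k(x)`, one has
`D_k(x) < D_{k+1}(x)`. -/
theorem stmt_7 (n : ℕ) (x : Fin n → ℝ) (hx : ∀ i, 0 < x i)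
    (k : ℕ) (hk : k + 1 ≤ n) :
    esym 1 x - (k + 1) * esym (k + 1) x / esym k x
      < esym 1 x - (k + 2) * esym (k + 2) x / esym (k + 1) x := by
  set s := Finset.univ.val.map x
  have hesym : ∀ j, esym j x = s.esymm j := fun j => (Finset.esymm_map_val x _ j).symm
  have hs : ∀ a ∈ s, 0 < a := by simp [s, hx]
  have hcard : Multiset.card s = n := by simp [s]
  simp only [hesym]
  have hk₀ := Multiset.esymm_pos hs (k := k) (by omega)
  have hk₁ := Multiset.esymm_pos hs (k := k + 1) (by omega)
  rw [sub_lt_sub_iff_left, div_lt_div_iff₀ hk₁ hk₀]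
  linear_combination Multiset.newton_esymm_lt hs (k := k) (by omega)
end

section
/- Subadditivity of symmetric polynomial ratios: for vectors x, y of n nonnegative reals each having at least k+1 nonzero entries, e_{k+1}(x+y)/e_k(x+y) ≥ e_{k+1}(x)/e_k(x) + e_{k+1}(y)/e_k(y), where x+y is the entrywise sum. -/
/-!
Write `q_k(x) = e_{k+1}(x) / e_k(x)` and `x⁽ⁱ⁾` for `x` with the `i`-th entry removed. Euler's
identity `∑ᵢ xᵢ e_k(x⁽ⁱ⁾) = (k+1) e_{k+1}(x)` together with `e_{k+1}(x) = e_{k+1}(x⁽ⁱ⁾) + xᵢ e_k(x⁽ⁱ⁾)`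
gives the recursion `(k+2) q_{k+1}(x) = ∑ᵢ xᵢ q_k(x⁽ⁱ⁾) / (xᵢ + q_k(x⁽ⁱ⁾))`. The parallel sum
`(a, p) ↦ a p / (a + p)` is superadditive and increasing in `p`, so superadditivity of `q_k`
passes from `k` to `k + 1`; for `k = 0` it is additivity of `q_0(x) = ∑ᵢ xᵢ`.
-/

open BigOperators

open Finset

variable {ι R : Type*}

def esymOn [CommSemiring R] (s : Finset ι) (k : ℕ) (x : ι → R) : R :=
  ∑ S ∈ s.powersetCard k, ∏ i ∈ S, x i

section Identities

variable [CommSemiring R] {s : Finset ι} {k : ℕ} {x : ι → R}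

lemma esymOn_zero : esymOn s 0 x = 1 := by simp [esymOn]

lemma esymOn_one : esymOn s 1 x = ∑ i ∈ s, x i := by
  simp [esymOn, powersetCard_one, sum_map]

variable [DecidableEq ι] {i : ι}

lemma sum_filter_notMem_powersetCard :
    ∑ S ∈ (s.powersetCard k).filter (i ∉ ·), ∏ j ∈ S, x j = esymOn (s.erase i) k x := by
  congr 1
  ext S
  simp only [mem_filter, mem_powersetCard, subset_erase]
  tauto

lemma sum_filter_mem_powersetCard (hi : i ∈ s) :
    ∑ S ∈ (s.powersetCard (k + 1)).filter (i ∈ ·), ∏ j ∈ S, x j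
      = x i * esymOn (s.erase i) k x := by
  rw [esymOn, mul_sum]
  refine sum_nbij' (fun S => S.erase i) (insert i) ?_ ?_ ?_ ?_
    fun S hS => (mul_prod_erase S x (mem_filter.1 hS).2).symm
  all_goals
    intro S hS
    simp only [mem_filter, mem_powersetCard] at hS ⊢
    grind

lemma esymOn_succ_of_mem (hi : i ∈ s) :
    esymOn s (k + 1) x = esymOn (s.erase i) (k + 1) x + x i * esymOn (s.erase i) k x := by
  rw [esymOn, ← sum_filter_add_sum_filter_not _ (i ∈ ·), sum_filter_mem_powersetCard hi,
    sum_filter_notMem_powersetCard, add_comm]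

lemma sum_mul_esymOn_erase :
    ∑ i ∈ s, x i * esymOn (s.erase i) k x = (k + 1) * esymOn s (k + 1) x := by
  calc ∑ i ∈ s, x i * esymOn (s.erase i) k x
      = ∑ i ∈ s, ∑ S ∈ (s.powersetCard (k + 1)).filter (i ∈ ·), ∏ j ∈ S, x j :=
        sum_congr rfl fun i hi => (sum_filter_mem_powersetCard hi).symm
    _ = ∑ S ∈ s.powersetCard (k + 1), ∑ _i ∈ S, ∏ j ∈ S, x j := by
        refine sum_comm' fun i S => ?_
        simp only [mem_filter, mem_powersetCard]
        grind
    _ = (k + 1) * esymOn s (k + 1) x := by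
        rw [esymOn, mul_sum]
        refine sum_congr rfl fun S hS => ?_
        rw [sum_const, (mem_powersetCard.1 hS).2, nsmul_eq_mul]
        push_cast
        ring

end Identities

section Inequalities

variable [Field R] [LinearOrder R] [IsStrictOrderedRing R] {s : Finset ι} {k : ℕ}

lemma esymOn_pos {x : ι → R} (hx : ∀ i, 0 ≤ x i) (h : k ≤ #(s.filter (x · ≠ 0))) :
    0 < esymOn s k x := by
  obtain ⟨T, hTs, rfl⟩ := exists_subset_card_eq h
  have hT : T ∈ s.powersetCard #T := mem_powersetCard.2 ⟨hTs.trans (filter_subset _ _), rfl⟩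
  have hprod : 0 < ∏ i ∈ T, x i :=
    prod_pos fun i hi => (hx i).lt_of_ne' (mem_filter.1 (hTs hi)).2
  exact hprod.trans_le <|
    single_le_sum (f := fun S => ∏ i ∈ S, x i) (fun S _ => prod_nonneg fun i _ => hx i) hT

lemma le_card_filter_erase [DecidableEq ι] {p : ι → Prop} [DecidablePred p] {m : ℕ} (i : ι)
    (h : m + 1 ≤ #(s.filter p)) : m ≤ #((s.erase i).filter p) := by
  rw [filter_erase]
  have := pred_card_le_card_erase (s := s.filter p) (a := i)
  omega

def esymRatio (s : Finset ι) (k : ℕ) (x : ι → R) : R :=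
  esymOn s (k + 1) x / esymOn s k x

lemma esymRatio_pos {x : ι → R} (hx : ∀ i, 0 ≤ x i) (h : k + 1 ≤ #(s.filter (x · ≠ 0))) :
    0 < esymRatio s k x :=
  div_pos (esymOn_pos hx h) (esymOn_pos hx (by omega))

lemma esymRatio_succ [DecidableEq ι] {x : ι → R} (hx : ∀ i, 0 ≤ x i)
    (h : k + 2 ≤ #(s.filter (x · ≠ 0))) :
    ((k : R) + 2) * esymRatio s (k + 1) x
      = ∑ i ∈ s, x i * esymRatio (s.erase i) k x / (x i + esymRatio (s.erase i) k x) := by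
  rw [esymRatio, mul_div_assoc', show ((k : R) + 2) = ((k + 1 : ℕ) : R) + 1 by push_cast; ring,
    ← sum_mul_esymOn_erase, sum_div]
  refine sum_congr rfl fun i hi => ?_
  have hA : 0 < esymOn (s.erase i) (k + 1) x := esymOn_pos hx (le_card_filter_erase i h)
  have hB : 0 < esymOn (s.erase i) k x := esymOn_pos hx (le_card_filter_erase i (by omega))
  have hxi := hx i
  rw [esymOn_succ_of_mem hi, esymRatio]
  field_simp
  ring

lemma mul_div_add_le_mul_div_add {a p q : R} (ha : 0 ≤ a) (hp : 0 < p) (hpq : p ≤ q) :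
    a * p / (a + p) ≤ a * q / (a + q) := by
  rw [div_le_div_iff₀ (by positivity) (by linarith)]
  nlinarith [mul_nonneg (mul_nonneg ha ha) (sub_nonneg.2 hpq)]

lemma mul_div_add_add_mul_div_add_le {a c p q : R} (ha : 0 ≤ a) (hc : 0 ≤ c) (hp : 0 < p)
    (hq : 0 < q) :
    a * p / (a + p) + c * q / (c + q) ≤ (a + c) * (p + q) / (a + c + (p + q)) := by
  have key : (a + c) * (p + q) / (a + c + (p + q)) - (a * p / (a + p) + c * q / (c + q))
      = (a * q - c * p) ^ 2 / ((a + p) * (c + q) * (a + c + (p + q))) := by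
    field_simp
    ring
  have : 0 ≤ (a * q - c * p) ^ 2 / ((a + p) * (c + q) * (a + c + (p + q))) := by positivity
  linarith

theorem esymRatio_add_le [DecidableEq ι] {x y : ι → R} (hx : ∀ i, 0 ≤ x i) (hy : ∀ i, 0 ≤ y i)
    (hxk : k + 1 ≤ #(s.filter (x · ≠ 0))) (hyk : k + 1 ≤ #(s.filter (y · ≠ 0))) :
    esymRatio s k x + esymRatio s k y ≤ esymRatio s k (x + y) := by
  induction k generalizing s with
  | zero => simp [esymRatio, esymOn_zero, esymOn_one, sum_add_distrib]
  | succ k ih =>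
    have hxy : ∀ i, 0 ≤ (x + y) i := fun i => add_nonneg (hx i) (hy i)
    have hxyk : k + 2 ≤ #(s.filter ((x + y) · ≠ 0)) :=
      hxk.trans <| card_le_card <| monotone_filter_right _ fun i _ hi =>
        (add_pos_of_pos_of_nonneg ((hx i).lt_of_ne' hi) (hy i)).ne'
    rw [← mul_le_mul_iff_right₀ (by positivity : (0 : R) < k + 2), mul_add,
      esymRatio_succ hx hxk, esymRatio_succ hy hyk, esymRatio_succ hxy hxyk,
      ← sum_add_distrib]
    refine sum_le_sum fun i _ => ?_
    have hp := esymRatio_pos hx (le_card_filter_erase i hxk)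
    have hq := esymRatio_pos hy (le_card_filter_erase i hyk)
    calc _ ≤ _ := mul_div_add_add_mul_div_add_le (hx i) (hy i) hp hq
      _ ≤ _ := mul_div_add_le_mul_div_add (hxy i) (by positivity)
          (ih (le_card_filter_erase i hxk) (le_card_filter_erase i hyk))

end Inequalities

/-- Superadditivity of symmetric polynomial ratios: for vectors `x, y` of `n`
nonnegative reals, each having at least `k+1` nonzero entries,
`e_{k+1}(x+y)/e_k(x+y) ≥ e_{k+1}(x)/e_k(x) + e_{k+1}(y)/e_k(y)`. -/
theorem stmt_15 (n k : ℕ) (x y : Fin n → ℝ)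
    (hx : ∀ i, 0 ≤ x i) (hy : ∀ i, 0 ≤ y i)
    (hxk : k + 1 ≤ (Finset.univ.filter (fun i => x i ≠ 0)).card)
    (hyk : k + 1 ≤ (Finset.univ.filter (fun i => y i ≠ 0)).card) :
    esym (k + 1) x / esym k x + esym (k + 1) y / esym k y
      ≤ esym (k + 1) (x + y) / esym k (x + y) :=
  esymRatio_add_le hx hy hxk hyk
end

section
/- Subadditivity of the DPP expectation: for n×n symmetric positive semidefinite matrices A and B, D_k(A) + D_k(B) ≥ D_k(A+B) for 0 ≤ k ≤ n, where D_k(M) = Tr[M] − (k+1)e_{k+1}(λ(M))/e_k(λ(M)) and λ(M) is the eigenvalue vector of M. -/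
open Matrix BigOperators

/-- The k-DPP expectation of a symmetric PSD matrix `M`:
`D_k(M) = Tr[M] − (k+1) e_{k+1}(λ(M))/e_k(λ(M))` where `λ(M)` is the eigenvalue
vector of `M`. -/
noncomputable def dppExp {n : ℕ} (k : ℕ) (M : Matrix (Fin n) (Fin n) ℝ)
    (hM : M.IsHermitian) : ℝ :=
  M.trace - (k + 1) * esym (k + 1) hM.eigenvalues / esym k hM.eigenvalues

/-! Write `eᵣ` for the elementary symmetric functions. The ratio `eᵣ₊₁ / eᵣ` is superadditive on
nonnegative vectors (Marcus–Lopes): deleting one coordinate at a time writes `(r + 2) eᵣ₊₂ / eᵣ₊₁`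
as the sum over `i` of the parallel sums `xᵢ * q / (xᵢ + q)`, where `q` is `eᵣ₊₁ / eᵣ` of `x`
without `xᵢ`; parallel sums are superadditive and monotone, so induction on `r` goes through.
Being also homogeneous and permutation invariant, the ratio is concave, hence Schur-concave.
If `U` diagonalises `A + B`, the diagonals of `Uᵀ A U` and `Uᵀ B U` are images of `λ(A)` and `λ(B)`
under doubly stochastic matrices and add up to `λ(A + B)`. So the ratio at `λ(A + B)` is at least
its value at `λ(A)` plus its value at `λ(B)`, and the trace is additive. -/

open Finset

variable {ι R : Type*}

noncomputable def esymmOn [CommSemiring R] (s : Finset ι) (r : ℕ) (x : ι → R) : R :=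
  ∑ t ∈ s.powersetCard r, ∏ i ∈ t, x i

section CommSemiring

variable [CommSemiring R]

@[simp]
theorem esymmOn_zero (s : Finset ι) (x : ι → R) : esymmOn s 0 x = 1 := by
  simp [esymmOn]

theorem esymmOn_one (s : Finset ι) (x : ι → R) : esymmOn s 1 x = ∑ i ∈ s, x i := by
  simp [esymmOn, powersetCard_one]

theorem esymmOn_smul (s : Finset ι) (r : ℕ) (c : R) (x : ι → R) :
    esymmOn s r (c • x) = c ^ r * esymmOn s r x := by
  rw [esymmOn, esymmOn, mul_sum]
  refine sum_congr rfl fun t ht => ?_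
  simp [prod_mul_distrib, (mem_powersetCard.1 ht).2]

theorem esymmOn_map {κ : Type*} (s : Finset ι) (e : ι ↪ κ) (r : ℕ) (x : κ → R) :
    esymmOn (s.map e) r x = esymmOn s r (x ∘ e) := by
  simp [esymmOn, powersetCard_map]

theorem esymmOn_univ_comp_perm [Fintype ι] (σ : Equiv.Perm ι) (r : ℕ) (x : ι → R) :
    esymmOn univ r (x ∘ σ) = esymmOn univ r x := by
  simpa using (esymmOn_map univ σ.toEmbedding r x).symm

variable [DecidableEq ι]

theorem esymmOn_insert {s : Finset ι} {a : ι} (ha : a ∉ s) (r : ℕ) (x : ι → R) :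
    esymmOn (insert a s) (r + 1) x = esymmOn s (r + 1) x + x a * esymmOn s r x := by
  have hfresh : ∀ t ∈ s.powersetCard r, a ∉ t := fun t ht =>
    notMem_mono (mem_powersetCard.1 ht).1 ha
  rw [esymmOn, powersetCard_succ_insert ha, sum_union, sum_image, esymmOn, esymmOn, mul_sum]
  · exact congrArg _ (sum_congr rfl fun t ht => prod_insert (hfresh t ht))
  · exact insert_erase_invOn.2.injOn.mono fun t ht => hfresh t ht
  · grind [disjoint_left]

theorem sum_mul_esymmOn_erase (s : Finset ι) (r : ℕ) (x : ι → R) :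
    ∑ i ∈ s, x i * esymmOn (s.erase i) r x = (r + 1) * esymmOn s (r + 1) x := by
  have hcount : ∀ t ∈ s.powersetCard (r + 1), ∑ i ∈ t, x i * ∏ j ∈ t.erase i, x j
      = (r + 1) * ∏ j ∈ t, x j := fun t ht => by
    rw [sum_congr rfl fun i hi => mul_prod_erase t x hi, sum_const, (mem_powersetCard.1 ht).2,
      nsmul_eq_mul]
    push_cast; rfl
  have hfiber : ∀ i ∈ s, ∑ t ∈ s.powersetCard (r + 1) with i ∈ t, x i * ∏ j ∈ t.erase i, x j
      = x i * esymmOn (s.erase i) r x := fun i hi => by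
    rw [esymmOn, mul_sum]
    refine sum_nbij' (fun t => t.erase i) (insert i) ?_ ?_ ?_ ?_ fun t ht => rfl <;>
      intro t ht <;> simp only [mem_filter, mem_powersetCard] at ht ⊢ <;> grind
  rw [esymmOn, mul_sum, ← sum_congr rfl hcount,
    sum_comm' (t' := s) (s' := fun i => (s.powersetCard (r + 1)).filter (i ∈ ·))]
  · exact (sum_congr rfl hfiber).symm
  · grind

end CommSemiring

section OrderedSemiring

variable [CommSemiring R] [PartialOrder R] [IsOrderedRing R] {s t : Finset ι} {x : ι → R}

theorem esymmOn_nonneg (hx : ∀ i ∈ s, 0 ≤ x i) (r : ℕ) : 0 ≤ esymmOn s r x :=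
  sum_nonneg fun _ ht => prod_nonneg fun i hi => hx i ((mem_powersetCard.1 ht).1 hi)

theorem esymmOn_mono (hts : t ⊆ s) (hx : ∀ i ∈ s, 0 ≤ x i) (r : ℕ) :
    esymmOn t r x ≤ esymmOn s r x :=
  sum_le_sum_of_subset_of_nonneg (powersetCard_mono hts) fun _ hu _ =>
    prod_nonneg fun i hi => hx i ((mem_powersetCard.1 hu).1 hi)

end OrderedSemiring

section Field

variable [Field R]

noncomputable def parallelSum (u v : R) : R := u * v / (u + v)

theorem parallelSum_div {u N D : R} (hN : D = 0 → N = 0) :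
    parallelSum u (N / D) = u * N / (N + u * D) := by
  rcases eq_or_ne D 0 with rfl | hD
  · simp [parallelSum, hN rfl]
  rw [parallelSum, mul_div_assoc', add_div' _ _ _ hD, div_div_div_cancel_right₀ hD, add_comm N]

noncomputable def esymmRatio (s : Finset ι) (r : ℕ) (x : ι → R) : R :=
  esymmOn s (r + 1) x / esymmOn s r x

theorem esymmRatio_zero (s : Finset ι) (x : ι → R) : esymmRatio s 0 x = ∑ i ∈ s, x i := by
  simp [esymmRatio, esymmOn_one]

theorem esymmRatio_smul (s : Finset ι) (r : ℕ) (c : R) (x : ι → R) :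
    esymmRatio s r (c • x) = c * esymmRatio s r x := by
  rw [esymmRatio, esymmRatio, esymmOn_smul, esymmOn_smul]
  rcases eq_or_ne c 0 with rfl | hc
  · simp
  rw [pow_succ', mul_assoc, mul_div_assoc, mul_div_mul_left _ _ (pow_ne_zero r hc)]

theorem esymmRatio_univ_comp_perm [Fintype ι] (σ : Equiv.Perm ι) (r : ℕ) (x : ι → R) :
    esymmRatio univ r (x ∘ σ) = esymmRatio univ r x := by
  simp only [esymmRatio, esymmOn_univ_comp_perm]

end Field

section OrderedField

variable [Field R] [LinearOrder R] [IsStrictOrderedRing R]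

theorem parallelSum_le_parallelSum_right {u v w : R} (hu : 0 ≤ u) (hv : 0 ≤ v) (hvw : v ≤ w) :
    parallelSum u v ≤ parallelSum u w := by
  rcases hu.eq_or_lt with rfl | hu
  · simp [parallelSum]
  rw [parallelSum, parallelSum, div_le_div_iff₀ (by linarith) (by linarith)]
  nlinarith [mul_le_mul_of_nonneg_left hvw (sq_nonneg u)]

theorem parallelSum_add_le {u₁ u₂ v₁ v₂ : R} (hu₁ : 0 ≤ u₁) (hu₂ : 0 ≤ u₂) (hv₁ : 0 ≤ v₁)
    (hv₂ : 0 ≤ v₂) : parallelSum u₁ v₁ + parallelSum u₂ v₂ ≤ parallelSum (u₁ + u₂) (v₁ + v₂) := by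
  rcases (add_nonneg hu₁ hv₁).eq_or_lt with h₁ | h₁
  · obtain ⟨rfl, rfl⟩ : u₁ = 0 ∧ v₁ = 0 := ⟨by linarith, by linarith⟩
    simp [parallelSum]
  rcases (add_nonneg hu₂ hv₂).eq_or_lt with h₂ | h₂
  · obtain ⟨rfl, rfl⟩ : u₂ = 0 ∧ v₂ = 0 := ⟨by linarith, by linarith⟩
    simp [parallelSum]
  rw [parallelSum, parallelSum, parallelSum, div_add_div _ _ h₁.ne' h₂.ne',
    div_le_div_iff₀ (by positivity) (by linarith)]
  nlinarith [sq_nonneg (u₁ * v₂ - u₂ * v₁)]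

variable {s : Finset ι} {x y : ι → R}

-- Together with `parallelSum_div`, this lets `esymmRatio_succ` go through when some `eᵣ`
-- vanish (where `/` returns `0`), so the entries need only be nonnegative.
theorem esymmOn_succ_eq_zero_of_eq_zero [DecidableEq ι] (hx : ∀ i ∈ s, 0 ≤ x i) {r : ℕ}
    (h : esymmOn s r x = 0) : esymmOn s (r + 1) x = 0 := by
  have hterm : ∀ i ∈ s, x i * esymmOn (s.erase i) r x = 0 := fun i _ => by
    rw [le_antisymm (h ▸ esymmOn_mono (erase_subset i s) hx r)
      (esymmOn_nonneg (fun j hj => hx j (mem_of_mem_erase hj)) r), mul_zero]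
  have hsum := sum_mul_esymmOn_erase s r x
  rw [sum_eq_zero hterm] at hsum
  exact (mul_eq_zero.1 hsum.symm).resolve_left (by positivity)

theorem esymmRatio_nonneg (hx : ∀ i ∈ s, 0 ≤ x i) (r : ℕ) : 0 ≤ esymmRatio s r x :=
  div_nonneg (esymmOn_nonneg hx _) (esymmOn_nonneg hx _)

theorem esymmRatio_succ [DecidableEq ι] (hx : ∀ i ∈ s, 0 ≤ x i) (r : ℕ) :
    ((r : R) + 2) * esymmRatio s (r + 1) x
      = ∑ i ∈ s, parallelSum (x i) (esymmRatio (s.erase i) r x) := by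
  have hterm : ∀ i ∈ s, parallelSum (x i) (esymmRatio (s.erase i) r x)
      = x i * esymmOn (s.erase i) (r + 1) x / esymmOn s (r + 1) x := fun i hi => by
    have hx' : ∀ j ∈ s.erase i, 0 ≤ x j := fun j hj => hx j (mem_of_mem_erase hj)
    rw [esymmRatio, parallelSum_div (esymmOn_succ_eq_zero_of_eq_zero hx'),
      ← esymmOn_insert (notMem_erase i s), insert_erase hi]
  rw [sum_congr rfl hterm, ← sum_div, sum_mul_esymmOn_erase, esymmRatio, mul_div_assoc]
  push_cast
  ring_nf

theorem esymmRatio_add_le (r : ℕ) (hx : ∀ i ∈ s, 0 ≤ x i) (hy : ∀ i ∈ s, 0 ≤ y i) :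
    esymmRatio s r x + esymmRatio s r y ≤ esymmRatio s r (x + y) := by
  classical
  induction r generalizing s with
  | zero => simp [esymmRatio_zero, sum_add_distrib]
  | succ r ih =>
    have hxy : ∀ i ∈ s, 0 ≤ (x + y) i := fun i hi => add_nonneg (hx i hi) (hy i hi)
    refine le_of_mul_le_mul_left ?_ (by positivity : (0 : R) < r + 2)
    rw [mul_add, esymmRatio_succ hx, esymmRatio_succ hy, esymmRatio_succ hxy, ← sum_add_distrib]
    refine sum_le_sum fun i hi => ?_
    have hx' : ∀ j ∈ s.erase i, 0 ≤ x j := fun j hj => hx j (mem_of_mem_erase hj)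
    have hy' : ∀ j ∈ s.erase i, 0 ≤ y j := fun j hj => hy j (mem_of_mem_erase hj)
    calc parallelSum (x i) (esymmRatio (s.erase i) r x)
          + parallelSum (y i) (esymmRatio (s.erase i) r y)
        ≤ parallelSum (x i + y i) (esymmRatio (s.erase i) r x + esymmRatio (s.erase i) r y) :=
          parallelSum_add_le (hx i hi) (hy i hi) (esymmRatio_nonneg hx' r)
            (esymmRatio_nonneg hy' r)
      _ ≤ parallelSum ((x + y) i) (esymmRatio (s.erase i) r (x + y)) :=
          parallelSum_le_parallelSum_right (hxy i hi)
            (add_nonneg (esymmRatio_nonneg hx' r) (esymmRatio_nonneg hy' r)) (ih hx' hy')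

theorem concaveOn_esymmRatio (s : Finset ι) (r : ℕ) :
    ConcaveOn R (Set.Ici (0 : ι → R)) (esymmRatio s r) := by
  refine ⟨convex_Ici 0, fun x hx y hy a b ha hb _ => ?_⟩
  rw [smul_eq_mul, smul_eq_mul, ← esymmRatio_smul, ← esymmRatio_smul]
  exact esymmRatio_add_le r (fun i _ => mul_nonneg ha (hx i)) (fun i _ => mul_nonneg hb (hy i))

theorem esymmRatio_le_esymmRatio_mulVec [Fintype ι] [DecidableEq ι] {S : Matrix ι ι R}
    (hS : S ∈ doublyStochastic R ι) (hx : 0 ≤ x) (r : ℕ) :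
    esymmRatio univ r x ≤ esymmRatio univ r (S *ᵥ x) := by
  obtain ⟨w, hw0, hw1, rfl⟩ := exists_eq_sum_perm_of_mem_doublyStochastic hS
  have hmulVec : (∑ σ, w σ • σ.permMatrix R) *ᵥ x = ∑ σ, w σ • (x ∘ σ) := by
    simp [sum_mulVec, smul_mulVec, permMatrix_mulVec]
  calc esymmRatio univ r x = ∑ σ, w σ • esymmRatio univ r (x ∘ σ) := by
        simp [esymmRatio_univ_comp_perm, ← sum_mul, hw1]
    _ ≤ esymmRatio univ r (∑ σ, w σ • (x ∘ σ)) :=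
        (concaveOn_esymmRatio univ r).le_map_sum (fun σ _ => hw0 σ) hw1 fun σ _ i => hx (σ i)
    _ = esymmRatio univ r ((∑ σ, w σ • σ.permMatrix R) *ᵥ x) := by rw [hmulVec]

end OrderedField

section Matrix

variable {n : Type*} [Fintype n] [DecidableEq n]

theorem diag_mul_diagonal_mul_transpose [CommSemiring R] (V : Matrix n n R) (d : n → R) :
    (V * diagonal d * Vᵀ).diag = (of fun i j => V i j ^ 2) *ᵥ d := by
  ext i
  simp only [diag_apply, mul_apply, diagonal_apply, mul_ite, mul_zero, sum_ite_eq', mem_univ,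
    if_true, transpose_apply, mulVec, dotProduct, of_apply]
  exact sum_congr rfl fun j _ => by ring

theorem sq_entries_mem_doublyStochastic {V : Matrix n n ℝ} (hV : V ∈ unitaryGroup n ℝ) :
    (of fun i j => V i j ^ 2) ∈ doublyStochastic ℝ n := by
  have hrow : ∀ i, ∑ j, V i j ^ 2 = 1 := fun i => by
    simpa [mul_apply, sq] using congrFun₂ (mem_unitaryGroup_iff.1 hV) i i
  have hcol : ∀ j, ∑ i, V i j ^ 2 = 1 := fun j => by
    simpa [mul_apply, sq] using congrFun₂ (mem_unitaryGroup_iff'.1 hV) j j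
  exact mem_doublyStochastic_iff_sum.2
    ⟨fun i j => sq_nonneg _, by simpa using hrow, by simpa using hcol⟩

theorem exists_mem_doublyStochastic_diag_conj {P : Matrix n n ℝ} (hP : P.IsHermitian)
    (U : unitaryGroup n ℝ) :
    ∃ S ∈ doublyStochastic ℝ n, (star (U : Matrix n n ℝ) * P * U).diag = S *ᵥ hP.eigenvalues := by
  set V := star U * hP.eigenvectorUnitary
  refine ⟨_, sq_entries_mem_doublyStochastic V.2, ?_⟩
  rw [← diag_mul_diagonal_mul_transpose]
  conv_lhs => rw [hP.spectral_theorem]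
  simp [V, Unitary.conjStarAlgAut_apply, Matrix.mul_assoc, star_eq_conjTranspose]

theorem esymmRatio_eigenvalues_add_le {A B : Matrix n n ℝ} (hA : A.PosSemidef)
    (hB : B.PosSemidef) (r : ℕ) :
    esymmRatio univ r hA.1.eigenvalues + esymmRatio univ r hB.1.eigenvalues
      ≤ esymmRatio univ r (hA.1.add hB.1).eigenvalues := by
  set U := (hA.1.add hB.1).eigenvectorUnitary
  obtain ⟨SA, hSA, hdiagA⟩ := exists_mem_doublyStochastic_diag_conj hA.1 U
  obtain ⟨SB, hSB, hdiagB⟩ := exists_mem_doublyStochastic_diag_conj hB.1 U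
  have hdiag : (star (U : Matrix n n ℝ) * (A + B) * U).diag = (hA.1.add hB.1).eigenvalues := by
    simpa using congrArg Matrix.diag (hA.1.add hB.1).conjStarAlgAut_star_eigenvectorUnitary
  have hnonneg {S : Matrix n n ℝ} (hS : S ∈ doublyStochastic ℝ n) {x : n → ℝ} (hx : 0 ≤ x) :
      0 ≤ S *ᵥ x :=
    nonneg_mulVec_of_mem_rowStochastic
      (mem_doublyStochastic_iff_mem_rowStochastic_and_mem_colStochastic.1 hS).1 hx
  calc esymmRatio univ r hA.1.eigenvalues + esymmRatio univ r hB.1.eigenvalues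
      ≤ esymmRatio univ r (SA *ᵥ hA.1.eigenvalues)
          + esymmRatio univ r (SB *ᵥ hB.1.eigenvalues) :=
        add_le_add (esymmRatio_le_esymmRatio_mulVec hSA hA.eigenvalues_nonneg r)
          (esymmRatio_le_esymmRatio_mulVec hSB hB.eigenvalues_nonneg r)
    _ ≤ esymmRatio univ r (SA *ᵥ hA.1.eigenvalues + SB *ᵥ hB.1.eigenvalues) :=
        esymmRatio_add_le r (fun i _ => hnonneg hSA hA.eigenvalues_nonneg i)
          (fun i _ => hnonneg hSB hB.eigenvalues_nonneg i)
    _ = esymmRatio univ r (hA.1.add hB.1).eigenvalues := by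
        rw [← hdiagA, ← hdiagB, ← diag_add, ← Matrix.add_mul, ← Matrix.mul_add, hdiag]

end Matrix

theorem stmt_16_general (n : ℕ) (A B : Matrix (Fin n) (Fin n) ℝ)
    (hA : A.PosSemidef) (hB : B.PosSemidef) (k : ℕ) :
    dppExp k (A + B) (hA.1.add hB.1) ≤ dppExp k A hA.1 + dppExp k B hB.1 := by
  have h := mul_le_mul_of_nonneg_left (esymmRatio_eigenvalues_add_le hA hB k)
    (by positivity : (0 : ℝ) ≤ k + 1)
  simp only [esymmRatio, esymmOn] at h
  simp only [dppExp, esym, trace_add, mul_div_assoc]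
  linarith

/-- Subadditivity of the DPP expectation: for `n × n` symmetric PSD matrices `A` and `B`
and `0 ≤ k ≤ n`, `D_k(A) + D_k(B) ≥ D_k(A+B)`. -/
theorem stmt_16 (n : ℕ) (A B : Matrix (Fin n) (Fin n) ℝ)
    (hA : A.PosSemidef) (hB : B.PosSemidef) (k : ℕ) (hk : k ≤ n) :
    dppExp k (A + B) (hA.1.add hB.1) ≤ dppExp k A hA.1 + dppExp k B hB.1 :=
  stmt_16_general n A B hA hB k
end

section
/- For a rescaled Laplacian L with Lh = 0, ‖h‖₂ = 1, and K = L⁺, if index j satisfies K_{jj}/h_j² ≤ (1+ζ)·min_i {K_{ii}/h_i²} for some ζ ≥ 0, then Tr[(L_{{j}^c,{j}^c})⁻¹] ≤ (2+ζ)·Tr[L⁺]; equivalently the single-column objective satisfies L_L^h({j}) = −K_{jj}/h_j² ≥ −(1+ζ)·Tr[L⁺]. -/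
/-!
The Penrose conditions and `ker L = span h` force `K L = L K = I - h hᵀ`, hence `K h = 0` and
`hᵀ K = 0`. The oblique projection `P = I - h e_jᵀ / h_j` onto `{x | x_j = 0}` along `h` satisfies
`L P = L` and has zero `j`-th row, so `P K Pᵀ L = P K L = P (I - h hᵀ) = P`; restricted to
`{j}ᶜ`, where `P` is the identity, this says that `(P K Pᵀ)_{{j}ᶜ,{j}ᶜ}` inverts
`L_{{j}ᶜ,{j}ᶜ}`. Its trace is `Tr K + K_jj / h_j²`, and `K_jj / h_j²` is at most `1 + ζ` times
the `h_i²`-weighted mean of the ratios `K_ii / h_i²`, which is `Tr K` since `‖h‖ = 1`.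
-/

open Matrix BigOperators

def inclNe {n : ℕ} (j : Fin n) : {x // x ≠ j} → Fin n := fun i => i

namespace Matrix

variable {ι R : Type*} [DecidableEq ι]

section CommRing

variable [Fintype ι] [CommRing R]

theorem one_sub_vecMulVec_mulVec_self {h : ι → R} (hh : h ⬝ᵥ h = 1) :
    (1 - vecMulVec h h) *ᵥ h = 0 := by
  simp [sub_mulVec, vecMulVec_mulVec, hh]

theorem vecMul_one_sub_vecMulVec_self {h : ι → R} (hh : h ⬝ᵥ h = 1) :
    h ᵥ* (1 - vecMulVec h h) = 0 := by
  simp [vecMul_sub, vecMul_vecMulVec, hh]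

theorem eq_one_sub_vecMulVec_of_ker_le_span {L Q : Matrix ι ι R} {h : ι → R}
    (hker : ∀ x, L *ᵥ x = 0 → ∃ c : R, x = c • h) (hh : h ⬝ᵥ h = 1)
    (hLQ : L * Q = L) (hQ : Q.IsSymm) (hQh : Q *ᵥ h = 0) :
    Q = 1 - vecMulVec h h := by
  have hcol : ∀ b, ∃ c : R, (1 - Q) *ᵥ Pi.single b 1 = c • h := fun b =>
    hker _ (by rw [mulVec_mulVec, Matrix.mul_sub, Matrix.mul_one, hLQ, sub_self, zero_mulVec])
  choose c hc using hcol
  have hQc : 1 - Q = vecMulVec h c := by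
    ext a b
    simpa [vecMulVec_apply, mul_comm] using congrFun (hc b) a
  have hch : c = h :=
    calc c = h ᵥ* vecMulVec h c := by rw [vecMul_vecMulVec, hh, one_smul]
      _ = h ᵥ* (1 - Q) := by rw [hQc]
      _ = h := by rw [vecMul_sub, vecMul_one, ← mulVec_transpose, hQ.eq, hQh, sub_zero]
  rw [hch] at hQc
  rw [← hQc, sub_sub_cancel]

variable {L K : Matrix ι ι R} {h : ι → R}

theorem penrose_mul_eq_one_sub_vecMulVec (hker : ∀ x, L *ᵥ x = 0 → ∃ c : R, x = c • h)
    (hh : h ⬝ᵥ h = 1) (hLh : L *ᵥ h = 0) (pen1 : L * K * L = L) (pen4 : (K * L)ᵀ = K * L) :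
    K * L = 1 - vecMulVec h h :=
  eq_one_sub_vecMulVec_of_ker_le_span hker hh (by rw [← Matrix.mul_assoc, pen1]) pen4
    (by rw [← mulVec_mulVec, hLh, mulVec_zero])

theorem mul_penrose_eq_one_sub_vecMulVec (hL : L.IsSymm)
    (hker : ∀ x, L *ᵥ x = 0 → ∃ c : R, x = c • h)
    (hh : h ⬝ᵥ h = 1) (hLh : L *ᵥ h = 0) (pen1 : L * K * L = L) (pen3 : (L * K)ᵀ = L * K) :
    L * K = 1 - vecMulVec h h := by
  have hLK : L * K = Kᵀ * L := by rw [← pen3, transpose_mul, hL.eq]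
  refine eq_one_sub_vecMulVec_of_ker_le_span hker hh ?_ pen3 ?_
  · simpa [hLK, transpose_mul, hL.eq, Matrix.mul_assoc] using congrArg transpose pen1
  · rw [hLK, ← mulVec_mulVec, hLh, mulVec_zero]

end CommRing

section Field

variable [Field R]

def obliqueProj (h : ι → R) (j : ι) : Matrix ι ι R := 1 - vecMulVec h (Pi.single j (h j)⁻¹)

variable {h : ι → R} {j : ι}

theorem obliqueProj_apply_self_left (hj : h j ≠ 0) (b : ι) : obliqueProj h j j b = 0 := by
  by_cases hb : j = b
  · subst hb; simp [obliqueProj, vecMulVec_apply, hj]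
  · simp [obliqueProj, vecMulVec_apply, hb, Ne.symm hb]

theorem submatrix_obliqueProj :
    ((obliqueProj h j).submatrix (↑) (↑) : Matrix {x // x ≠ j} {x // x ≠ j} R) = 1 := by
  ext a b
  simp [obliqueProj, vecMulVec_apply, b.2, one_apply, Subtype.val_inj]

variable [Fintype ι]

theorem obliqueProj_mulVec_self (hj : h j ≠ 0) : obliqueProj h j *ᵥ h = 0 := by
  simp [obliqueProj, sub_mulVec, vecMulVec_mulVec, hj]

theorem mul_obliqueProj {L : Matrix ι ι R} (hLh : L *ᵥ h = 0) : L * obliqueProj h j = L := by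
  simp [obliqueProj, Matrix.mul_sub, mul_vecMulVec, hLh]

theorem submatrix_mul_submatrix_of_apply_eq_zero (A B : Matrix ι ι R) (hA : ∀ a, A a j = 0) :
    (A.submatrix (↑) (↑) * B.submatrix (↑) (↑) : Matrix {x // x ≠ j} {x // x ≠ j} R) =
      (A * B).submatrix (↑) (↑) := by
  ext a b
  simp [mul_apply, Fintype.sum_eq_add_sum_subtype_ne _ j, hA]

theorem trace_submatrix_ne (A : Matrix ι ι R) :
    (A.submatrix (↑) (↑) : Matrix {x // x ≠ j} {x // x ≠ j} R).trace = A.trace - A j j := by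
  simp [trace, Fintype.sum_eq_add_sum_subtype_ne _ j]

variable {L K : Matrix ι ι R}

theorem obliqueProj_mul_mul_transpose_apply_right (hj : h j ≠ 0) (a : ι) :
    (obliqueProj h j * K * (obliqueProj h j)ᵀ) a j = 0 := by
  simp [mul_apply, obliqueProj_apply_self_left hj]

theorem inv_submatrix_ne_eq (hL : L.IsSymm) (hLh : L *ᵥ h = 0)
    (hKL : K * L = 1 - vecMulVec h h) (hj : h j ≠ 0) :
    (L.submatrix (↑) (↑) : Matrix {x // x ≠ j} {x // x ≠ j} R)⁻¹ =
      (obliqueProj h j * K * (obliqueProj h j)ᵀ).submatrix (↑) (↑) := by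
  set P := obliqueProj h j
  have hPL : Pᵀ * L = L := by
    simpa [transpose_mul, hL.eq] using congrArg transpose (mul_obliqueProj (j := j) hLh)
  have hML : P * K * Pᵀ * L = P := by
    rw [Matrix.mul_assoc, hPL, Matrix.mul_assoc, hKL, Matrix.mul_sub, Matrix.mul_one,
      mul_vecMulVec, obliqueProj_mulVec_self hj, zero_vecMulVec, sub_zero]
  apply inv_eq_left_inv
  rw [submatrix_mul_submatrix_of_apply_eq_zero _ _ (obliqueProj_mul_mul_transpose_apply_right hj),
    hML, submatrix_obliqueProj]

theorem trace_obliqueProj_mul_mul_transpose (hKh : K *ᵥ h = 0) (hhK : h ᵥ* K = 0)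
    (hh : h ⬝ᵥ h = 1) :
    (obliqueProj h j * K * (obliqueProj h j)ᵀ).trace = K.trace + K j j / h j ^ 2 := by
  set w : ι → R := Pi.single j (h j)⁻¹
  have hP : obliqueProj h j = 1 - vecMulVec h w := rfl
  have hPK : obliqueProj h j * K = K - vecMulVec h (w ᵥ* K) := by
    rw [hP, Matrix.sub_mul, Matrix.one_mul, vecMulVec_mul]
  have hhPK : h ᵥ* (obliqueProj h j * K) = -(w ᵥ* K) := by
    rw [hPK, vecMul_sub, vecMul_vecMulVec, hh, one_smul, hhK, zero_sub]
  calc (obliqueProj h j * K * (obliqueProj h j)ᵀ).trace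
      = (obliqueProj h j * K).trace - h ⬝ᵥ ((obliqueProj h j * K) *ᵥ w) := by
        rw [hP, transpose_sub, transpose_one, transpose_vecMulVec, ← hP, Matrix.mul_sub,
          Matrix.mul_one, mul_vecMulVec, trace_sub, trace_vecMulVec, dotProduct_comm]
    _ = K.trace + w ᵥ* K ⬝ᵥ w := by
        rw [dotProduct_mulVec, hhPK, hPK, trace_sub, trace_vecMulVec, dotProduct_comm,
          ← dotProduct_mulVec, hKh, dotProduct_zero, neg_dotProduct]
        ring
    _ = K.trace + K j j / h j ^ 2 := by
        simp [w]
        ring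

end Field

end Matrix

theorem le_mul_sum_of_forall_le_mul_div {ι 𝕜 : Type*} [Fintype ι] [Field 𝕜] [LinearOrder 𝕜]
    [IsStrictOrderedRing 𝕜] {w a : ι → 𝕜} {x c : 𝕜} (hw : ∀ i, 0 < w i) (hsum : ∑ i, w i = 1)
    (hx : ∀ i, x ≤ c * (a i / w i)) : x ≤ c * ∑ i, a i :=
  calc x = ∑ i, w i * x := by rw [← Finset.sum_mul, hsum, one_mul]
    _ ≤ ∑ i, w i * (c * (a i / w i)) :=
      Finset.sum_le_sum fun i _ => mul_le_mul_of_nonneg_left (hx i) (hw i).le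
    _ = c * ∑ i, a i := by
      rw [Finset.mul_sum]
      exact Finset.sum_congr rfl fun i _ => by field_simp [(hw i).ne']

theorem stmt_18_general (n : ℕ) (L K : Matrix (Fin n) (Fin n) ℝ) (h : Fin n → ℝ)
    (hL : L.PosSemidef) (hLh : L *ᵥ h = 0) (hnorm : ∑ i, h i ^ 2 = 1)
    (hpos : ∀ i, 0 < h i)
    (hker : ∀ x : Fin n → ℝ, L *ᵥ x = 0 → ∃ c : ℝ, x = c • h)
    (pen1 : L * K * L = L) (pen2 : K * L * K = K)
    (pen3 : (L * K)ᵀ = L * K) (pen4 : (K * L)ᵀ = K * L)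
    (ζ : ℝ) (j : Fin n)
    (hj : ∀ i, K j j / h j ^ 2 ≤ (1 + ζ) * (K i i / h i ^ 2)) :
    ((L.submatrix (inclNe j) (inclNe j))⁻¹).trace ≤ (2 + ζ) * K.trace ∧
      -((1 + ζ) * K.trace) ≤ -(K j j / h j ^ 2) := by
  have hLsymm : L.IsSymm := isHermitian_iff_isSymm.mp hL.isHermitian
  have hh : h ⬝ᵥ h = 1 := by simpa [dotProduct, sq] using hnorm
  have hj0 : h j ≠ 0 := (hpos j).ne'
  have hKL := penrose_mul_eq_one_sub_vecMulVec hker hh hLh pen1 pen4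
  have hLK := mul_penrose_eq_one_sub_vecMulVec hLsymm hker hh hLh pen1 pen3
  have hKh : K *ᵥ h = 0 := by
    rw [← pen2, Matrix.mul_assoc, ← mulVec_mulVec, hLK, one_sub_vecMulVec_mulVec_self hh,
      mulVec_zero]
  have hhK : h ᵥ* K = 0 := by
    rw [← pen2, ← vecMul_vecMul, hKL, vecMul_one_sub_vecMulVec_self hh, zero_vecMul]
  have htrace : ((L.submatrix (inclNe j) (inclNe j))⁻¹).trace = K.trace + K j j / h j ^ 2 := by
    rw [show inclNe j = ((↑) : {x // x ≠ j} → Fin n) from rfl,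
      inv_submatrix_ne_eq hLsymm hLh hKL hj0, trace_submatrix_ne,
      obliqueProj_mul_mul_transpose_apply_right hj0, sub_zero,
      trace_obliqueProj_mul_mul_transpose hKh hhK hh]
  have hmin : K j j / h j ^ 2 ≤ (1 + ζ) * K.trace :=
    le_mul_sum_of_forall_le_mul_div (fun i => pow_pos (hpos i) 2) hnorm hj
  constructor <;> linarith

/-- Bounding of the objective after one iteration, for a rescaled Laplacian `L`
(symmetric PSD with kernel spanned by the entrywise positive unit vector `h`) and
`K = L⁺` (characterized by the Penrose conditions): if the index `j` satisfies
`K_{jj}/h_j² ≤ (1+ζ) min_i K_{ii}/h_i²` (stated as `K_{jj}/h_j² ≤ (1+ζ)(K_{ii}/h_i²)`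
for every `i`) with `ζ ≥ 0`, then `Tr[(L_{{j}ᶜ,{j}ᶜ})⁻¹] ≤ (2+ζ) Tr[L⁺]`;
equivalently `−K_{jj}/h_j² ≥ −(1+ζ) Tr[L⁺]`. -/
theorem stmt_18 (n : ℕ) (L K : Matrix (Fin n) (Fin n) ℝ) (h : Fin n → ℝ)
    (hL : L.PosSemidef) (hLh : L *ᵥ h = 0) (hnorm : ∑ i, h i ^ 2 = 1)
    (hpos : ∀ i, 0 < h i)
    (hker : ∀ x : Fin n → ℝ, L *ᵥ x = 0 → ∃ c : ℝ, x = c • h)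
    (pen1 : L * K * L = L) (pen2 : K * L * K = K)
    (pen3 : (L * K)ᵀ = L * K) (pen4 : (K * L)ᵀ = K * L)
    (ζ : ℝ) (hζ : 0 ≤ ζ) (j : Fin n)
    (hj : ∀ i, K j j / h j ^ 2 ≤ (1 + ζ) * (K i i / h i ^ 2)) :
    ((L.submatrix (inclNe j) (inclNe j))⁻¹).trace ≤ (2 + ζ) * K.trace ∧
      -((1 + ζ) * K.trace) ≤ -(K j j / h j ^ 2) :=
  stmt_18_general n L K h hL hLh hnorm hpos hker pen1 pen2 pen3 pen4 ζ j hj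
end
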